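/- For every generic F-type icosahedral model set Λ and every set U of at most three pairwise non-parallel L^{(τ,0,1)}-directions, the set C(Λ) of convex subsets of Λ is not determined by the X-rays in the directions of U; that is, there exist two distinct convex subsets C₁ ≠ C₂ of Λ with X_u C₁ = X_u C₂ for all u ∈ U. -/

import Mathlib

noncomputable section

open Set

/-- The golden ratio τ = (1+√5)/2. -/
def gold : ℝ := (1 + Real.sqrt 5) / 2

/-- Euclidean 3-space. -/
abbrev E3 := EuclideanSpace ℝ (Fin 3)

/-- Membership in ℚ(τ) ⊂ ℝ. -/
def inQtau (x : ℝ) : Prop := ∃ p q : ℚ, x = (p : ℝ) + (q : ℝ) * gold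

open Classical in
/-- The Galois conjugation on ℚ(τ) ⊂ ℝ, determined by √5 ↦ -√5, i.e. τ ↦ 1-τ
(extended by 0 outside ℚ(τ)). -/
def conjTau (x : ℝ) : ℝ :=
  if h : ∃ p q : ℚ, x = (p : ℝ) + (q : ℝ) * gold then
    ((Classical.choose h : ℚ) : ℝ) +
      ((Classical.choose (Classical.choose_spec h) : ℚ) : ℝ) * (1 - gold)
  else 0

/-- The ring ℤ[τ] = ℤ ⊕ ℤτ ⊂ ℝ. -/
def Ztau : Set ℝ := {x | ∃ m n : ℤ, x = (m : ℝ) + (n : ℝ) * gold}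

/-- The standard face-centred icosahedral module M_F. -/
def MF : Set E3 :=
  {v | ∃ a b c : ℝ, a ∈ Ztau ∧ b ∈ Ztau ∧ c ∈ Ztau ∧
    v = a • (WithLp.toLp 2 (![2, 0, 0] : Fin 3 → ℝ) : E3) + b • (WithLp.toLp 2 (![gold + 1, gold, 1] : Fin 3 → ℝ) : E3) + c • (WithLp.toLp 2 (![0, 0, 2] : Fin 3 → ℝ) : E3)}

/-- L := (1/2)·M_F. -/
def Lset : Set E3 := {v | (2 : ℝ) • v ∈ MF}

/-- The star map: coordinatewise Galois conjugation. -/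
def starMap (v : E3) : E3 := WithLp.toLp 2 (fun i => conjTau (v i) : Fin 3 → ℝ)

/-- A window: ∅ ≠ int W ⊆ W ⊆ cl(int W) with cl(int W) compact. -/
def IsWindow (W : Set E3) : Prop :=
  (interior W).Nonempty ∧ W ⊆ closure (interior W) ∧ IsCompact (closure (interior W))

/-- The F-type icosahedral model set Λ(t,W). -/
def modelSet (t : E3) (W : Set E3) : Set E3 :=
  {x | ∃ α ∈ Lset, starMap α ∈ W ∧ x = t + α}

/-- Genericity of the window: ∂W ∩ L* = ∅. -/
def IsGeneric (W : Set E3) : Prop := frontier W ∩ (starMap '' Lset) = ∅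

/-- The line through p in direction u. -/
def lineThrough (p u : E3) : Set E3 := {x | ∃ r : ℝ, x = p + r • u}

/-- An L-direction: a unit vector parallel to a nonzero element of L. -/
def IsLDir (u : E3) : Prop :=
  u ∈ Metric.sphere (0 : E3) 1 ∧ ∃ v ∈ Lset, v ≠ 0 ∧ ∃ c : ℝ, u = c • v

/-- An L^{(τ,0,1)}-direction: an L-direction orthogonal to (τ,0,1). -/
def IsLTauDir (u : E3) : Prop :=
  IsLDir u ∧ gold * u 0 + u 2 = 0

/-- A set of pairwise non-parallel directions. -/
def PairwiseNonParallel (U : Set E3) : Prop :=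
  U.Pairwise fun u v => ¬ ∃ c : ℝ, u = c • v

/-- Two finite sets have the same X-ray in direction u. -/
def XRayEq (F G : Set E3) (u : E3) : Prop :=
  ∀ p : E3, (F ∩ lineThrough p u).ncard = (G ∩ lineThrough p u).ncard

/-- C is a (finite) convex subset of Λ, i.e. C = conv(C) ∩ Λ. -/
def ConvexSubset (Λ C : Set E3) : Prop :=
  C.Finite ∧ C ⊆ Λ ∧ C = convexHull ℝ C ∩ Λ

/-- A collection of finite sets is determined by the X-rays in the directions of U. -/
def DeterminedBy (𝒞 : Set (Set E3)) (U : Set E3) : Prop :=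
  ∀ F₁ ∈ 𝒞, ∀ F₂ ∈ 𝒞, (∀ u ∈ U, XRayEq F₁ F₂ u) → F₁ = F₂



lemma sqrt5_sq : Real.sqrt 5 * Real.sqrt 5 = 5 := Real.mul_self_sqrt (by norm_num)

lemma sqrt5_gt : (2:ℝ) < Real.sqrt 5 := by
  nlinarith [sqrt5_sq, Real.sqrt_nonneg 5]

lemma sqrt5_lt : Real.sqrt 5 < 3 := by
  nlinarith [sqrt5_sq, Real.sqrt_nonneg 5]

lemma goldsq : gold * gold = gold + 1 := by
  simp only [gold]; linear_combination sqrt5_sq / 4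

lemma ggt : (3/2 : ℝ) < gold := by simp only [gold]; linarith [sqrt5_gt]
lemma glt : gold < 2 := by simp only [gold]; linarith [sqrt5_lt]
lemma gpos : (0:ℝ) < gold := by linarith [ggt]
lemma gne : gold ≠ 0 := ne_of_gt gpos

lemma gold_irr : Irrational gold := by
  have h5 : Irrational (Real.sqrt 5) := by
    have := (by norm_num : Nat.Prime 5).irrational_sqrt
    simpa using this
  intro ⟨r, hr⟩
  apply h5
  refine ⟨2*r - 1, ?_⟩
  push_cast
  simp only [gold] at hr
  linarith [hr]

lemma qtau_unique {p q p' q' : ℚ} (h : (p:ℝ) + q*gold = (p':ℝ) + q'*gold) :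
    p = p' ∧ q = q' := by
  by_cases hq : q = q'
  · subst hq
    constructor
    · exact_mod_cast (by linarith : (p:ℝ) = p')
    · rfl
  · exfalso
    apply gold_irr
    refine ⟨(p - p')/(q' - q), ?_⟩
    have hqq : ((q':ℝ) - q) ≠ 0 := by
      intro hc
      exact hq (by exact_mod_cast (by linarith : (q:ℝ) = q'))
    push_cast
    field_simp
    linarith [h]

lemma conjTau_eval (p q : ℚ) : conjTau ((p:ℝ) + q*gold) = (p:ℝ) + q*(1-gold) := by
  have h : ∃ p' q' : ℚ, ((p:ℝ) + q*gold) = (p':ℝ) + q'*gold := ⟨p, q, rfl⟩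
  rw [conjTau, dif_pos h]
  obtain ⟨hp, hq⟩ := qtau_unique (Classical.choose_spec (Classical.choose_spec h))
  have hpR : ((Classical.choose h : ℚ) : ℝ) = (p:ℝ) := by exact_mod_cast congrArg (Rat.cast : ℚ → ℝ) hp.symm
  have hqR : ((Classical.choose (Classical.choose_spec h) : ℚ) : ℝ) = (q:ℝ) := by
    exact_mod_cast congrArg (Rat.cast : ℚ → ℝ) hq.symm
  linear_combination hpR + (1-gold)*hqR

lemma inQtau_add {x y : ℝ} (hx : inQtau x) (hy : inQtau y) : inQtau (x+y) := by
  obtain ⟨p, q, rfl⟩ := hx; obtain ⟨p', q', rfl⟩ := hy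
  exact ⟨p + p', q + q', by push_cast; ring⟩

lemma inQtau_neg {x : ℝ} (hx : inQtau x) : inQtau (-x) := by
  obtain ⟨p, q, rfl⟩ := hx; exact ⟨-p, -q, by push_cast; ring⟩

lemma inQtau_sub {x y : ℝ} (hx : inQtau x) (hy : inQtau y) : inQtau (x-y) := by
  simpa [sub_eq_add_neg] using inQtau_add hx (inQtau_neg hy)

lemma inQtau_mul {x y : ℝ} (hx : inQtau x) (hy : inQtau y) : inQtau (x*y) := by
  obtain ⟨p, q, rfl⟩ := hx; obtain ⟨p', q', rfl⟩ := hy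
  refine ⟨p*p' + q*q', p*q' + q*p' + q*q', ?_⟩
  push_cast
  linear_combination ((q:ℝ)*q') * goldsq

lemma inQtau_rat (p : ℚ) : inQtau (p:ℝ) := ⟨p, 0, by push_cast; ring⟩
lemma inQtau_gold : inQtau gold := ⟨0, 1, by push_cast; ring⟩

lemma inQtau_inv {x : ℝ} (hx : inQtau x) (h0 : x ≠ 0) : inQtau x⁻¹ := by
  obtain ⟨p, q, rfl⟩ := hx
  set D : ℚ := p*p + p*q - q*q with hD
  have key : ((p:ℝ) + q*gold) * ((p:ℝ) + q - q*gold) = (D:ℝ) := by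
    push_cast [hD]; linear_combination (-(q:ℝ)*q) * goldsq
  have hD0 : (D:ℝ) ≠ 0 := by
    intro hc
    rw [hc] at key
    rcases mul_eq_zero.mp key with h | h
    · exact h0 h
    · apply gold_irr
      have hq0 : (q:ℝ) ≠ 0 := by
        intro hq0
        rw [hq0] at h
        apply h0
        rw [hq0]
        simpa using h
      exact ⟨(p+q)/q, by push_cast; field_simp; linarith [h]⟩
  refine ⟨(p+q)/D, -q/D, ?_⟩
  have h2 : ((((p+q)/D : ℚ)):ℝ) + (((-q/D : ℚ)):ℝ)*gold = ((p:ℝ) + q - q*gold)/(D:ℝ) := by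
    push_cast; ring
  rw [h2]
  refine (inv_eq_of_mul_eq_one_right ?_).symm.symm
  have h3 : ((p:ℝ) + q*gold) * (((p:ℝ) + q - q*gold)/(D:ℝ)) = (D:ℝ)/(D:ℝ) := by
    rw [← key]; ring
  rw [h3, div_self hD0]

lemma inQtau_div {x y : ℝ} (hx : inQtau x) (hy : inQtau y) (h0 : y ≠ 0) :
    inQtau (x/y) := by
  rw [div_eq_mul_inv]; exact inQtau_mul hx (inQtau_inv hy h0)

lemma conjTau_add {x y : ℝ} (hx : inQtau x) (hy : inQtau y) :
    conjTau (x+y) = conjTau x + conjTau y := by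
  obtain ⟨p, q, rfl⟩ := hx; obtain ⟨p', q', rfl⟩ := hy
  have : (p:ℝ) + q*gold + ((p':ℝ) + q'*gold) = ((p+p' : ℚ):ℝ) + ((q+q':ℚ):ℝ)*gold := by
    push_cast; ring
  rw [this, conjTau_eval, conjTau_eval, conjTau_eval]
  push_cast; ring

lemma conjTau_mul {x y : ℝ} (hx : inQtau x) (hy : inQtau y) :
    conjTau (x*y) = conjTau x * conjTau y := by
  obtain ⟨p, q, rfl⟩ := hx; obtain ⟨p', q', rfl⟩ := hy
  have : ((p:ℝ) + q*gold) * ((p':ℝ) + q'*gold)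
      = ((p*p' + q*q' : ℚ):ℝ) + ((p*q' + q*p' + q*q':ℚ):ℝ)*gold := by
    push_cast; linear_combination ((q:ℝ)*q') * goldsq
  rw [this, conjTau_eval, conjTau_eval, conjTau_eval]
  push_cast; linear_combination (-(q:ℝ)*q') * goldsq

lemma Ztau_inQtau {x : ℝ} (hx : x ∈ Ztau) : inQtau x := by
  obtain ⟨m, n, rfl⟩ := hx; exact ⟨m, n, by push_cast; ring⟩

lemma conjTau_int (m n : ℤ) : conjTau ((m:ℝ) + n*gold) = (m:ℝ) + n*(1-gold) := by
  have : ((m:ℝ) + n*gold) = ((m:ℚ):ℝ) + ((n:ℚ):ℝ)*gold := by push_cast; ring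
  rw [this, conjTau_eval]; push_cast; ring

lemma Ztau_add {x y : ℝ} (hx : x ∈ Ztau) (hy : y ∈ Ztau) : x + y ∈ Ztau := by
  obtain ⟨m, n, rfl⟩ := hx; obtain ⟨m', n', rfl⟩ := hy
  exact ⟨m+m', n+n', by push_cast; ring⟩

lemma Ztau_neg {x : ℝ} (hx : x ∈ Ztau) : -x ∈ Ztau := by
  obtain ⟨m, n, rfl⟩ := hx; exact ⟨-m, -n, by push_cast; ring⟩

lemma Ztau_mul {x y : ℝ} (hx : x ∈ Ztau) (hy : y ∈ Ztau) : x * y ∈ Ztau := by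
  obtain ⟨m, n, rfl⟩ := hx; obtain ⟨m', n', rfl⟩ := hy
  exact ⟨m*m' + n*n', m*n' + n*m' + n*n', by push_cast; linear_combination ((n:ℝ)*n') * goldsq⟩

lemma Ztau_zero : (0:ℝ) ∈ Ztau := ⟨0, 0, by push_cast; ring⟩
lemma Ztau_one : (1:ℝ) ∈ Ztau := ⟨1, 0, by push_cast; ring⟩
lemma Ztau_gold : gold ∈ Ztau := ⟨0, 1, by push_cast; ring⟩
lemma Ztau_int (m : ℤ) : (m:ℝ) ∈ Ztau := ⟨m, 0, by push_cast; ring⟩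

lemma Ztau_goldpow (k : ℕ) : gold ^ k ∈ Ztau := by
  induction k with
  | zero => simpa using Ztau_one
  | succ n ih => rw [pow_succ]; exact Ztau_mul ih Ztau_gold

def ZtauGroup : AddSubgroup ℝ where
  carrier := Ztau
  add_mem' := Ztau_add
  zero_mem' := Ztau_zero
  neg_mem' := Ztau_neg

lemma dense_Ztau : Dense Ztau := by
  rcases AddSubgroup.dense_or_cyclic ZtauGroup with h | ⟨a, ha⟩
  · exact h
  · exfalso
    have h1 : (1:ℝ) ∈ ZtauGroup := Ztau_one
    have hg : gold ∈ ZtauGroup := Ztau_gold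
    rw [ha, AddSubgroup.mem_closure_singleton] at h1 hg
    obtain ⟨k, hk⟩ := h1
    obtain ⟨l, hl⟩ := hg
    have hk0 : (k:ℝ) ≠ 0 := by
      intro hc
      rw [zsmul_eq_mul, hc, zero_mul] at hk
      exact one_ne_zero hk.symm
    apply gold_irr
    refine ⟨(l:ℚ)/(k:ℚ), ?_⟩
    rw [zsmul_eq_mul] at hk hl
    have hgk : gold * k = l := by linear_combination (-(k:ℝ))*hl + (l:ℝ)*hk
    push_cast
    rw [div_eq_iff hk0]
    linarith [hgk]

lemma Ztau_approx (x : ℝ) {ε : ℝ} (hε : 0 < ε) : ∃ z ∈ Ztau, |z - x| < ε := by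
  have := Metric.dense_iff.mp dense_Ztau x ε hε
  obtain ⟨y, hy1, hy2⟩ := this
  exact ⟨y, hy2, by rwa [Metric.mem_ball, Real.dist_eq] at hy1⟩


lemma E3_ext {v w : E3} (h0 : v 0 = w 0) (h1 : v 1 = w 1) (h2 : v 2 = w 2) : v = w := by
  ext i; fin_cases i <;> assumption

lemma starMap_apply (v : E3) (i : Fin 3) : starMap v i = conjTau (v i) := rfl

lemma vec6_0 (a b c d e f : ℤ) : (![a,b,c,d,e,f] : Fin 6 → ℤ) 0 = a := rfl
lemma vec6_1 (a b c d e f : ℤ) : (![a,b,c,d,e,f] : Fin 6 → ℤ) 1 = b := rfl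
lemma vec6_2 (a b c d e f : ℤ) : (![a,b,c,d,e,f] : Fin 6 → ℤ) 2 = c := rfl
lemma vec6_3 (a b c d e f : ℤ) : (![a,b,c,d,e,f] : Fin 6 → ℤ) 3 = d := rfl
lemma vec6_4 (a b c d e f : ℤ) : (![a,b,c,d,e,f] : Fin 6 → ℤ) 4 = e := rfl
lemma vec6_5 (a b c d e f : ℤ) : (![a,b,c,d,e,f] : Fin 6 → ℤ) 5 = f := rfl

def phys (m : Fin 6 → ℤ) : E3 :=
  WithLp.toLp 2 (![(m 0 + m 1*gold) + (m 2 + m 3*gold)*(gold+1)/2,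
    (m 2 + m 3*gold)*gold/2,
    (m 2 + m 3*gold)/2 + (m 4 + m 5*gold)] : Fin 3 → ℝ)

def istar (m : Fin 6 → ℤ) : E3 :=
  WithLp.toLp 2 (![(m 0 + m 1*(1-gold)) + (m 2 + m 3*(1-gold))*((1-gold)+1)/2,
    (m 2 + m 3*(1-gold))*(1-gold)/2,
    (m 2 + m 3*(1-gold))/2 + (m 4 + m 5*(1-gold))] : Fin 3 → ℝ)

lemma phys_mem_Lset (m : Fin 6 → ℤ) : phys m ∈ Lset := by
  refine ⟨(m 0 : ℝ) + m 1 * gold, (m 2 : ℝ) + m 3 * gold, (m 4 : ℝ) + m 5 * gold,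
    ⟨m 0, m 1, rfl⟩, ⟨m 2, m 3, rfl⟩, ⟨m 4, m 5, rfl⟩, ?_⟩
  refine E3_ext ?_ ?_ ?_ <;>
    simp [phys, PiLp.add_apply, PiLp.smul_apply, Matrix.cons_val_zero, Matrix.cons_val_one,
      Matrix.head_cons] <;> ring

lemma Lset_elim {v : E3} (hv : v ∈ Lset) : ∃ m : Fin 6 → ℤ, v = phys m := by
  obtain ⟨a, b, c, ⟨m1, n1, rfl⟩, ⟨m2, n2, rfl⟩, ⟨m3, n3, rfl⟩, heq⟩ := hv
  refine ⟨![m1, n1, m2, n2, m3, n3], ?_⟩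
  have h0 := congrFun (congrArg WithLp.ofLp heq) 0
  have h1 := congrFun (congrArg WithLp.ofLp heq) 1
  have h2 := congrFun (congrArg WithLp.ofLp heq) 2
  simp [PiLp.add_apply, PiLp.smul_apply, Matrix.cons_val_zero, Matrix.cons_val_one,
    Matrix.head_cons] at h0 h1 h2
  refine E3_ext ?_ ?_ ?_ <;>
    simp [phys, vec6_0, vec6_1, vec6_2, vec6_3, vec6_4, vec6_5] <;>
    linarith [h0, h1, h2]

lemma star_phys (m : Fin 6 → ℤ) : starMap (phys m) = istar m := by
  refine E3_ext ?_ ?_ ?_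
  · have h : phys m 0 = ((m 0 + (m 2 + m 3)/2 : ℚ):ℝ) + ((m 1 + (m 2 + 2*m 3)/2 : ℚ):ℝ) * gold := by
      simp [phys]; push_cast; linear_combination ((m 3:ℝ)/2)*goldsq
    rw [starMap_apply, h, conjTau_eval]
    simp [istar]; push_cast; linear_combination (-(m 3:ℝ)/2)*goldsq
  · have h : phys m 1 = ((m 3/2 : ℚ):ℝ) + (((m 2 + m 3)/2 : ℚ):ℝ) * gold := by
      simp [phys]; push_cast; linear_combination ((m 3:ℝ)/2)*goldsq
    rw [starMap_apply, h, conjTau_eval]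
    simp [istar]; push_cast; linear_combination (-(m 3:ℝ)/2)*goldsq
  · have h : phys m 2 = ((m 4 + m 2/2 : ℚ):ℝ) + ((m 5 + m 3/2 : ℚ):ℝ) * gold := by
      simp [phys]; push_cast; ring
    rw [starMap_apply, h, conjTau_eval]
    simp [istar]; push_cast; ring

lemma phys_add (m m' : Fin 6 → ℤ) : phys (m + m') = phys m + phys m' := by
  refine E3_ext ?_ ?_ ?_ <;>
    simp [phys, PiLp.add_apply, Pi.add_apply] <;> push_cast <;> ring

lemma istar_add (m m' : Fin 6 → ℤ) : istar (m + m') = istar m + istar m' := by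
  refine E3_ext ?_ ?_ ?_ <;>
    simp [istar, PiLp.add_apply, Pi.add_apply] <;> push_cast <;> ring

lemma phys_smul (k : ℤ) (m : Fin 6 → ℤ) : phys (k • m) = (k:ℝ) • phys m := by
  refine E3_ext ?_ ?_ ?_ <;>
    simp [phys, PiLp.smul_apply, Pi.smul_apply] <;> push_cast <;> ring

lemma istar_smul (k : ℤ) (m : Fin 6 → ℤ) : istar (k • m) = (k:ℝ) • istar m := by
  refine E3_ext ?_ ?_ ?_ <;>
    simp [istar, PiLp.smul_apply, Pi.smul_apply] <;> push_cast <;> ring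

def tmul (m : Fin 6 → ℤ) : Fin 6 → ℤ := ![m 1, m 0 + m 1, m 3, m 2 + m 3, m 5, m 4 + m 5]

lemma phys_tmul (m : Fin 6 → ℤ) : phys (tmul m) = gold • phys m := by
  refine E3_ext ?_ ?_ ?_ <;>
    simp [phys, tmul, PiLp.smul_apply, vec6_0, vec6_1, vec6_2, vec6_3, vec6_4, vec6_5] <;>
    push_cast
  · linear_combination (-((m 1:ℝ) + (m 3:ℝ)*(gold+1)/2))*goldsq
  · linear_combination (-(m 3:ℝ)*gold/2)*goldsq
  · linear_combination (-((m 3:ℝ)/2 + (m 5:ℝ)))*goldsq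

lemma istar_tmul (m : Fin 6 → ℤ) : istar (tmul m) = (1-gold) • istar m := by
  refine E3_ext ?_ ?_ ?_ <;>
    simp [istar, tmul, PiLp.smul_apply, vec6_0, vec6_1, vec6_2, vec6_3, vec6_4, vec6_5] <;>
    push_cast
  · linear_combination (-((m 1:ℝ) + (m 3:ℝ)*(2-gold)/2))*goldsq
  · linear_combination (-(m 3:ℝ)*(1-gold)/2)*goldsq
  · linear_combination (-((m 3:ℝ)/2 + (m 5:ℝ)))*goldsq

def tpow (k : ℕ) (m : Fin 6 → ℤ) : Fin 6 → ℤ := tmul^[k] m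

lemma phys_tpow (k : ℕ) (m : Fin 6 → ℤ) : phys (tpow k m) = gold^k • phys m := by
  induction k with
  | zero => simp [tpow]
  | succ n ih =>
    rw [tpow, Function.iterate_succ_apply', ← tpow, phys_tmul, ih, smul_smul, pow_succ]
    ring_nf

lemma istar_tpow (k : ℕ) (m : Fin 6 → ℤ) : istar (tpow k m) = (1-gold)^k • istar m := by
  induction k with
  | zero => simp [tpow]
  | succ n ih =>
    rw [tpow, Function.iterate_succ_apply', ← tpow, istar_tmul, ih, smul_smul, pow_succ]
    ring_nf

def cr (a b : E3) : E3 := WithLp.toLp 2 (![a 1*b 2 - a 2*b 1, a 2*b 0 - a 0*b 2, a 0*b 1 - a 1*b 0] : Fin 3 → ℝ)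

def dt (a b : E3) : ℝ := a 0*b 0 + a 1*b 1 + a 2*b 2

lemma cr_apply0 (a b : E3) : cr a b 0 = a 1*b 2 - a 2*b 1 := rfl
lemma cr_apply1 (a b : E3) : cr a b 1 = a 2*b 0 - a 0*b 2 := rfl
lemma cr_apply2 (a b : E3) : cr a b 2 = a 0*b 1 - a 1*b 0 := rfl

lemma E3_zero_apply (i : Fin 3) : (0 : E3) i = 0 := rfl

lemma E3_eq_zero {v : E3} (h0 : v 0 = 0) (h1 : v 1 = 0) (h2 : v 2 = 0) : v = 0 :=
  E3_ext h0 h1 h2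

lemma E3_ne_zero_coord {v : E3} (hv : v ≠ 0) : v 0 ≠ 0 ∨ v 1 ≠ 0 ∨ v 2 ≠ 0 := by
  by_contra h
  push_neg at h
  exact hv (E3_eq_zero h.1 h.2.1 h.2.2)

lemma dt_pos {a : E3} (ha : a ≠ 0) : 0 < dt a a := by
  rcases E3_ne_zero_coord ha with h | h | h <;> simp only [dt] <;>
    nlinarith [sq_nonneg (a 0), sq_nonneg (a 1), sq_nonneg (a 2), mul_self_pos.mpr h]

lemma cr_smul_left (r : ℝ) (a b : E3) : cr (r • a) b = r • cr a b := by
  refine E3_ext ?_ ?_ ?_ <;> simp [cr, PiLp.smul_apply] <;> ring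

lemma cr_smul_right (r : ℝ) (a b : E3) : cr a (r • b) = r • cr a b := by
  refine E3_ext ?_ ?_ ?_ <;> simp [cr, PiLp.smul_apply] <;> ring

lemma cr_add_right (a b c : E3) : cr a (b + c) = cr a b + cr a c := by
  refine E3_ext ?_ ?_ ?_ <;> simp [cr, PiLp.add_apply] <;> ring

lemma cr_self (a : E3) : cr a a = 0 := by
  refine E3_ext ?_ ?_ ?_ <;> simp [cr] <;> ring

lemma cr_zero_left (b : E3) : cr 0 b = 0 := by
  refine E3_ext ?_ ?_ ?_ <;> simp [cr, E3_zero_apply]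

lemma cr_sub_right (a b c : E3) : cr a (b - c) = cr a b - cr a c := by
  refine E3_ext ?_ ?_ ?_ <;> simp [cr, PiLp.sub_apply] <;> ring

lemma eq_smul_of_cr_eq_zero {a b : E3} (h : cr a b = 0) (ha : a ≠ 0) :
    b = ((dt a b)/(dt a a)) • a := by
  have hc0 : a 1*b 2 - a 2*b 1 = 0 := congrFun (congrArg WithLp.ofLp h) 0
  have hc1 : a 2*b 0 - a 0*b 2 = 0 := congrFun (congrArg WithLp.ofLp h) 1
  have hc2 : a 0*b 1 - a 1*b 0 = 0 := congrFun (congrArg WithLp.ofLp h) 2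
  have hd : dt a a ≠ 0 := ne_of_gt (dt_pos ha)
  refine E3_ext ?_ ?_ ?_ <;> simp only [PiLp.smul_apply, smul_eq_mul] <;>
    rw [div_mul_eq_mul_div, eq_div_iff hd] <;> simp only [dt]
  · linear_combination (-(a 1))*hc2 + (a 2)*hc1
  · linear_combination (a 0)*hc2 + (-(a 2))*hc0
  · linear_combination (-(a 0))*hc1 + (a 1)*hc0

lemma cr_ne_zero {u v : E3} (hv : v ≠ 0) (h : ¬∃ c : ℝ, u = c • v) : cr v u ≠ 0 := by
  intro hc
  exact h ⟨(dt v u)/(dt v v), eq_smul_of_cr_eq_zero hc hv⟩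

lemma cr_zero_right (a : E3) : cr a 0 = 0 := by
  refine E3_ext ?_ ?_ ?_ <;> simp [cr, E3_zero_apply]

lemma combo_zero {e1 e2 : E3} (h : cr e1 e2 ≠ 0) {a b : ℝ}
    (hc : a • e1 + b • e2 = 0) : a = 0 ∧ b = 0 := by
  have he1 : e1 ≠ 0 := by
    intro hz; rw [hz] at h; exact h (cr_zero_left e2)
  have h2 : cr e1 (a • e1 + b • e2) = 0 := by rw [hc]; exact cr_zero_right e1
  rw [cr_add_right, cr_smul_right, cr_smul_right, cr_self, smul_zero, zero_add] at h2
  have hb : b = 0 := by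
    rcases smul_eq_zero.mp h2 with hb | hb
    · exact hb
    · exact absurd hb h
  subst hb
  rw [zero_smul, add_zero] at hc
  rcases smul_eq_zero.mp hc with ha | ha
  · exact ⟨ha, rfl⟩
  · exact absurd ha he1

lemma coord_le_norm (v : E3) (i : Fin 3) : |v i| ≤ ‖v‖ := by
  have h : ‖v‖ = Real.sqrt (‖v 0‖^2 + ‖v 1‖^2 + ‖v 2‖^2) := by
    rw [EuclideanSpace.norm_eq, Fin.sum_univ_three]
  rw [h, Real.norm_eq_abs, Real.norm_eq_abs, Real.norm_eq_abs]
  have : |v i| = Real.sqrt (|v i|^2) := by rw [Real.sqrt_sq (abs_nonneg _)]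
  rw [this]
  apply Real.sqrt_le_sqrt
  fin_cases i <;> simp [sq_abs] <;> nlinarith [sq_nonneg (v 0), sq_nonneg (v 1), sq_nonneg (v 2)]

lemma norm_le_sum (v : E3) : ‖v‖ ≤ |v 0| + |v 1| + |v 2| := by
  have h : ‖v‖ = Real.sqrt (‖v 0‖^2 + ‖v 1‖^2 + ‖v 2‖^2) := by
    rw [EuclideanSpace.norm_eq, Fin.sum_univ_three]
  rw [h, Real.norm_eq_abs, Real.norm_eq_abs, Real.norm_eq_abs]
  rw [show |v 0| + |v 1| + |v 2| = Real.sqrt ((|v 0| + |v 1| + |v 2|)^2) by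
    rw [Real.sqrt_sq (by positivity)]]
  apply Real.sqrt_le_sqrt
  nlinarith [abs_nonneg (v 0), abs_nonneg (v 1), abs_nonneg (v 2), sq_abs (v 0), sq_abs (v 1),
    sq_abs (v 2), mul_nonneg (abs_nonneg (v 0)) (abs_nonneg (v 1)),
    mul_nonneg (abs_nonneg (v 0)) (abs_nonneg (v 2)),
    mul_nonneg (abs_nonneg (v 1)) (abs_nonneg (v 2))]

lemma phys0 (m : Fin 6 → ℤ) :
    phys m 0 = ((m 0:ℝ) + (m 1:ℝ)*gold) + ((m 2:ℝ) + (m 3:ℝ)*gold)*(gold+1)/2 := rfl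
lemma phys1 (m : Fin 6 → ℤ) : phys m 1 = ((m 2:ℝ) + (m 3:ℝ)*gold)*gold/2 := rfl
lemma phys2 (m : Fin 6 → ℤ) :
    phys m 2 = ((m 2:ℝ) + (m 3:ℝ)*gold)/2 + ((m 4:ℝ) + (m 5:ℝ)*gold) := rfl
lemma istar0 (m : Fin 6 → ℤ) :
    istar m 0 = ((m 0:ℝ) + (m 1:ℝ)*(1-gold)) + ((m 2:ℝ) + (m 3:ℝ)*(1-gold))*((1-gold)+1)/2 := rfl
lemma istar1 (m : Fin 6 → ℤ) : istar m 1 = ((m 2:ℝ) + (m 3:ℝ)*(1-gold))*(1-gold)/2 := rfl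
lemma istar2 (m : Fin 6 → ℤ) :
    istar m 2 = ((m 2:ℝ) + (m 3:ℝ)*(1-gold))/2 + ((m 4:ℝ) + (m 5:ℝ)*(1-gold)) := rfl

lemma abs_sub' (a b : ℝ) : |a - b| ≤ |a| + |b| := by
  calc |a - b| = |a + -b| := by ring_nf
    _ ≤ |a| + |-b| := abs_add_le _ _
    _ = |a| + |b| := by rw [abs_neg]

lemma quarter_bound {x c s : ℝ} (hc : 1/4 ≤ c) (h : |x| * c ≤ s) : |x| ≤ 4*s := by
  nlinarith [abs_nonneg x, mul_nonneg (abs_nonneg x) (by linarith : (0:ℝ) ≤ c - 1/4)]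

lemma star_approx (z : E3) {ε : ℝ} (hε : 0 < ε) : ∃ m : Fin 6 → ℤ, ‖istar m - z‖ < ε := by
  have hg1 : (1:ℝ) - gold ≠ 0 := by intro h; have := ggt; linarith
  have hδ : 0 < ε/4 := by linarith
  obtain ⟨B, ⟨mB, nB, hBrep⟩, hB⟩ := Ztau_approx (2 * z 1/(1-gold)) hδ
  obtain ⟨A, ⟨mA, nA, hArep⟩, hA⟩ := Ztau_approx (z 0 - B*((1-gold)+1)/2) hδ
  obtain ⟨C, ⟨mC, nC, hCrep⟩, hC⟩ := Ztau_approx (z 2 - B/2) hδ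
  refine ⟨![mA+nA, -nA, mB+nB, -nB, mC+nC, -nC], ?_⟩
  set m : Fin 6 → ℤ := ![mA+nA, -nA, mB+nB, -nB, mC+nC, -nC] with hm
  have hmA : (m 0:ℝ) + (m 1:ℝ)*(1-gold) = A := by
    rw [hArep, hm]; simp [vec6_0, vec6_1]; push_cast; ring
  have hmB : (m 2:ℝ) + (m 3:ℝ)*(1-gold) = B := by
    rw [hBrep, hm]; simp [vec6_2, vec6_3]; push_cast; ring
  have hmC : (m 4:ℝ) + (m 5:ℝ)*(1-gold) = C := by
    rw [hCrep, hm]; simp [vec6_4, vec6_5]; push_cast; ring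
  have e0 : istar m 0 - z 0 = A - (z 0 - B*((1-gold)+1)/2) := by
    rw [istar0, hmA, hmB]; ring
  have e2 : istar m 2 - z 2 = C - (z 2 - B/2) := by
    rw [istar2, hmC, hmB]; ring
  have e1 : istar m 1 - z 1 = ((1-gold)/2) * (B - 2*z 1/(1-gold)) := by
    rw [istar1, hmB]; field_simp
  have habs1 : |istar m 1 - z 1| < ε/4 := by
    rw [e1, abs_mul]
    have hlt : |(1-gold)/2| < 1 := by
      rw [abs_div, abs_two]
      have : |1-gold| < 2 := abs_lt.mpr ⟨by linarith [glt], by linarith [ggt]⟩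
      linarith
    calc |(1-gold)/2| * |B - 2*z 1/(1-gold)| ≤ 1 * |B - 2*z 1/(1-gold)| := by
          apply mul_le_mul_of_nonneg_right (le_of_lt hlt) (abs_nonneg _)
      _ < ε/4 := by rw [one_mul]; exact hB
  have hsum := norm_le_sum (istar m - z)
  have hc0 : (istar m - z) 0 = istar m 0 - z 0 := rfl
  have hc1 : (istar m - z) 1 = istar m 1 - z 1 := rfl
  have hc2 : (istar m - z) 2 = istar m 2 - z 2 := rfl
  rw [hc0, hc1, hc2] at hsum
  have h0' : |istar m 0 - z 0| < ε/4 := by rw [e0]; exact hA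
  have h2' : |istar m 2 - z 2| < ε/4 := by rw [e2]; exact hC
  calc ‖istar m - z‖ ≤ |istar m 0 - z 0| + |istar m 1 - z 1| + |istar m 2 - z 2| := hsum
    _ < ε := by linarith

set_option maxHeartbeats 1000000 in
lemma finite_core (t : E3) (W K : Set E3) (R2 : ℝ) (hW : ∀ w ∈ W, ‖w‖ ≤ R2)
    (R1 : ℝ) (hK : ∀ x ∈ K, ‖x‖ ≤ R1) : (modelSet t W ∩ K).Finite := by
  set S1 := R1 + ‖t‖ with hS1def
  set Bd := 100*(S1+R2) + 100 with hBd
  set N : ℤ := ⌈Bd⌉ with hN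
  have hbox : (Set.pi Set.univ (fun _ : Fin 6 => Set.Icc (-N) N)).Finite :=
    Set.Finite.pi (fun _ => Set.finite_Icc _ _)
  refine Set.Finite.subset (Set.Finite.image (fun m : Fin 6 → ℤ => t + phys m) hbox) ?_
  rintro x ⟨⟨α, hαL, hαW, rfl⟩, hxK⟩
  obtain ⟨m, rfl⟩ := Lset_elim hαL
  refine ⟨m, ?_, rfl⟩
  have hphys : ∀ i, |phys m i| ≤ S1 := by
    intro i
    calc |phys m i| ≤ ‖phys m‖ := coord_le_norm _ i
      _ = ‖(t + phys m) - t‖ := by rw [add_sub_cancel_left]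
      _ ≤ ‖t + phys m‖ + ‖t‖ := norm_sub_le _ _
      _ ≤ R1 + ‖t‖ := by linarith [hK _ hxK]
  have histar : ∀ i, |istar m i| ≤ R2 := by
    intro i
    calc |istar m i| ≤ ‖istar m‖ := coord_le_norm _ i
      _ ≤ R2 := by rw [← star_phys]; exact hW _ hαW
  have hS1 : 0 ≤ S1 := le_trans (abs_nonneg _) (hphys 0)
  have hR2 : 0 ≤ R2 := le_trans (abs_nonneg _) (histar 0)
  set x0 : ℝ := (m 0 : ℝ) with hx0
  set x1 : ℝ := (m 1 : ℝ) with hx1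
  set x2 : ℝ := (m 2 : ℝ) with hx2
  set x3 : ℝ := (m 3 : ℝ) with hx3
  set x4 : ℝ := (m 4 : ℝ) with hx4
  set x5 : ℝ := (m 5 : ℝ) with hx5
  set PA := x0 + x1*gold with hPA
  set QA := x0 + x1*(1-gold) with hQA
  set PB := x2 + x3*gold with hPB
  set QB := x2 + x3*(1-gold) with hQB
  set PC := x4 + x5*gold with hPC
  set QC := x4 + x5*(1-gold) with hQC
  -- |PB| ≤ 4*S1
  have hPBb : |PB| ≤ 4*S1 := by
    have h2 := hphys 1
    rw [phys1] at h2
    have heq : PB*gold/2 = PB*(gold/2) := by ring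
    rw [show (x2:ℝ) + x3*gold = PB from rfl] at h2
    rw [heq, abs_mul, abs_of_pos (by linarith [ggt] : (0:ℝ) < gold/2)] at h2
    exact quarter_bound (by linarith [ggt]) h2
  have hQBb : |QB| ≤ 4*R2 := by
    have k2 := histar 1
    rw [istar1] at k2
    rw [show (x2:ℝ) + x3*(1-gold) = QB from rfl] at k2
    have heq : QB*(1-gold)/2 = -(QB*((gold-1)/2)) := by ring
    rw [heq, abs_neg, abs_mul, abs_of_pos (by linarith [ggt] : (0:ℝ) < (gold-1)/2)] at k2
    exact quarter_bound (by linarith [ggt]) k2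
  have hx3b : |x3| ≤ 4*(4*S1 + 4*R2) := by
    have heq : x3*(2*gold-1) = PB - QB := by rw [hPB, hQB]; ring
    have h := abs_sub' PB QB
    rw [← heq] at h
    rw [abs_mul, abs_of_pos (by linarith [ggt] : (0:ℝ) < 2*gold-1)] at h
    exact quarter_bound (by linarith [ggt]) (le_trans h (by linarith [hPBb, hQBb]))
  have hx2b : |x2| ≤ 4*S1 + 2*(4*(4*S1+4*R2)) := by
    have heq : x2 = PB - x3*gold := by rw [hPB]; ring
    rw [heq]
    calc |PB - x3*gold| ≤ |PB| + |x3*gold| := abs_sub' _ _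
      _ ≤ 4*S1 + 2*(4*(4*S1+4*R2)) := by
          rw [abs_mul, abs_of_pos gpos]
          nlinarith [hPBb, hx3b, glt, abs_nonneg x3, ggt]
  -- |PA| and |QA|
  have hPAb : |PA| ≤ S1 + (4*S1)*2 := by
    have h1 := hphys 0
    rw [phys0] at h1
    rw [show (x0:ℝ) + x1*gold = PA from rfl, show (x2:ℝ) + x3*gold = PB from rfl] at h1
    have heq : PA = (PA + PB*(gold+1)/2) - PB*((gold+1)/2) := by ring
    rw [heq]
    calc |PA + PB*(gold+1)/2 - PB*((gold+1)/2)| ≤ |PA + PB*(gold+1)/2| + |PB*((gold+1)/2)| :=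
        abs_sub' _ _
      _ ≤ S1 + (4*S1)*2 := by
          rw [abs_mul, abs_of_pos (by linarith [ggt] : (0:ℝ) < (gold+1)/2)]
          nlinarith [hPBb, glt, ggt, abs_nonneg PB, h1]
  have hQAb : |QA| ≤ R2 + (4*R2)*1 := by
    have k1 := histar 0
    rw [istar0] at k1
    rw [show (x0:ℝ) + x1*(1-gold) = QA from rfl, show (x2:ℝ) + x3*(1-gold) = QB from rfl] at k1
    have heq : QA = (QA + QB*((1-gold)+1)/2) - QB*((2-gold)/2) := by ring
    rw [heq]
    calc |QA + QB*((1-gold)+1)/2 - QB*((2-gold)/2)| ≤ |QA + QB*((1-gold)+1)/2| + |QB*((2-gold)/2)| :=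
        abs_sub' _ _
      _ ≤ R2 + (4*R2)*1 := by
          rw [abs_mul, abs_of_pos (by linarith [glt] : (0:ℝ) < (2-gold)/2)]
          nlinarith [hQBb, glt, ggt, abs_nonneg QB, k1]
  have hx1b : |x1| ≤ 4*((S1 + (4*S1)*2) + (R2 + (4*R2)*1)) := by
    have heq : x1*(2*gold-1) = PA - QA := by rw [hPA, hQA]; ring
    have h := abs_sub' PA QA
    rw [← heq] at h
    rw [abs_mul, abs_of_pos (by linarith [ggt] : (0:ℝ) < 2*gold-1)] at h
    exact quarter_bound (by linarith [ggt]) (le_trans h (by linarith [hPAb, hQAb]))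
  have hx0b : |x0| ≤ (S1 + (4*S1)*2) + 2*(4*((S1 + (4*S1)*2) + (R2 + (4*R2)*1))) := by
    have heq : x0 = PA - x1*gold := by rw [hPA]; ring
    rw [heq]
    calc |PA - x1*gold| ≤ |PA| + |x1*gold| := abs_sub' _ _
      _ ≤ _ := by
          rw [abs_mul, abs_of_pos gpos]
          nlinarith [hPAb, hx1b, glt, abs_nonneg x1, ggt]
  -- PC, QC
  have hPCb : |PC| ≤ S1 + (4*S1)*1 := by
    have h3 := hphys 2
    rw [phys2] at h3
    rw [show (x4:ℝ) + x5*gold = PC from rfl, show (x2:ℝ) + x3*gold = PB from rfl] at h3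
    have heq : PC = (PB/2 + PC) - PB*(1/2) := by ring
    rw [heq]
    calc |PB/2 + PC - PB*(1/2)| ≤ |PB/2 + PC| + |PB*(1/2)| := abs_sub' _ _
      _ ≤ S1 + (4*S1)*1 := by
          rw [abs_mul, abs_of_pos (by norm_num : (0:ℝ) < (1:ℝ)/2)]
          nlinarith [hPBb, abs_nonneg PB, h3]
  have hQCb : |QC| ≤ R2 + (4*R2)*1 := by
    have k3 := histar 2
    rw [istar2] at k3
    rw [show (x4:ℝ) + x5*(1-gold) = QC from rfl, show (x2:ℝ) + x3*(1-gold) = QB from rfl] at k3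
    have heq : QC = (QB/2 + QC) - QB*(1/2) := by ring
    rw [heq]
    calc |QB/2 + QC - QB*(1/2)| ≤ |QB/2 + QC| + |QB*(1/2)| := abs_sub' _ _
      _ ≤ R2 + (4*R2)*1 := by
          rw [abs_mul, abs_of_pos (by norm_num : (0:ℝ) < (1:ℝ)/2)]
          nlinarith [hQBb, abs_nonneg QB, k3]
  have hx5b : |x5| ≤ 4*((S1 + (4*S1)*1) + (R2 + (4*R2)*1)) := by
    have heq : x5*(2*gold-1) = PC - QC := by rw [hPC, hQC]; ring
    have h := abs_sub' PC QC
    rw [← heq] at h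
    rw [abs_mul, abs_of_pos (by linarith [ggt] : (0:ℝ) < 2*gold-1)] at h
    exact quarter_bound (by linarith [ggt]) (le_trans h (by linarith [hPCb, hQCb]))
  have hx4b : |x4| ≤ (S1 + (4*S1)*1) + 2*(4*((S1 + (4*S1)*1) + (R2 + (4*R2)*1))) := by
    have heq : x4 = PC - x5*gold := by rw [hPC]; ring
    rw [heq]
    calc |PC - x5*gold| ≤ |PC| + |x5*gold| := abs_sub' _ _
      _ ≤ _ := by
          rw [abs_mul, abs_of_pos gpos]
          nlinarith [hPCb, hx5b, glt, abs_nonneg x5, ggt]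
  -- conclude
  have hall : ∀ i, |(m i : ℝ)| ≤ Bd := by
    intro i
    fin_cases i
    · show |x0| ≤ Bd
      rw [hBd]; linarith [hx0b]
    · show |x1| ≤ Bd
      rw [hBd]; linarith [hx1b]
    · show |x2| ≤ Bd
      rw [hBd]; linarith [hx2b]
    · show |x3| ≤ Bd
      rw [hBd]; linarith [hx3b]
    · show |x4| ≤ Bd
      rw [hBd]; linarith [hx4b]
    · show |x5| ≤ Bd
      rw [hBd]; linarith [hx5b]
  intro i _
  rw [Set.mem_Icc]
  have hiB := abs_le.mp (hall i)
  have hceil : Bd ≤ (N:ℝ) := Int.le_ceil Bd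
  constructor
  · have : -(N:ℝ) ≤ (m i : ℝ) := by linarith [hiB.1]
    exact_mod_cast this
  · have : (m i : ℝ) ≤ (N:ℝ) := by linarith [hiB.2]
    exact_mod_cast this

lemma line_iff {u p x y : E3} {r : ℝ} (h : y = x + r • u) :
    x ∈ lineThrough p u ↔ y ∈ lineThrough p u := by
  constructor
  · rintro ⟨r0, rfl⟩
    exact ⟨r0 + r, by rw [h, add_smul]; abel⟩
  · rintro ⟨r0, hr0⟩
    refine ⟨r0 - r, ?_⟩
    have : x = y - r • u := by rw [h]; abel
    rw [this, hr0, sub_smul]; abel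

open Classical in
lemma ncard_triple {x1 x2 x3 : E3} (h12 : x1 ≠ x2) (h13 : x1 ≠ x3) (h23 : x2 ≠ x3)
    (s : Set E3) : (({x1, x2, x3} : Set E3) ∩ s).ncard =
      (if x1 ∈ s then 1 else 0) + (if x2 ∈ s then 1 else 0) + (if x3 ∈ s then 1 else 0) := by
  classical
  have hcoe : (({x1, x2, x3} : Set E3) : Set E3) ∩ s
      = ↑(({x1, x2, x3} : Finset E3).filter (· ∈ s)) := by
    ext z
    simp only [Set.mem_inter_iff, Set.mem_insert_iff, Set.mem_singleton_iff, Finset.coe_filter,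
      Finset.mem_insert, Finset.mem_singleton, Set.mem_setOf_eq]
  rw [hcoe, Set.ncard_coe_finset]
  by_cases h1 : x1 ∈ s <;> by_cases h2 : x2 ∈ s <;> by_cases h3 : x3 ∈ s <;>
    simp [Finset.filter_insert, Finset.filter_singleton, h1, h2, h3,
      Finset.card_insert_of_notMem, Finset.mem_insert, Finset.mem_singleton, h12, h13, h23]

lemma xray_pair {u : E3} {a0 a1 a2 b0 b1 b2 : E3} {r0 r1 r2 : ℝ}
    (e0 : b0 = a0 + r0 • u) (e1 : b1 = a1 + r1 • u) (e2 : b2 = a2 + r2 • u)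
    (ha01 : a0 ≠ a1) (ha02 : a0 ≠ a2) (ha12 : a1 ≠ a2)
    (hb01 : b0 ≠ b1) (hb02 : b0 ≠ b2) (hb12 : b1 ≠ b2) (p : E3) :
    (({a0, a1, a2} : Set E3) ∩ lineThrough p u).ncard
      = (({b0, b1, b2} : Set E3) ∩ lineThrough p u).ncard := by
  rw [ncard_triple ha01 ha02 ha12, ncard_triple hb01 hb02 hb12]
  rw [propext (line_iff e0), propext (line_iff e1), propext (line_iff e2)]

lemma dt_add_left (a b c : E3) : dt (a + b) c = dt a c + dt b c := by
  simp [dt, PiLp.add_apply]; ring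

lemma dt_smul_left (r : ℝ) (a c : E3) : dt (r • a) c = r * dt a c := by
  simp [dt, PiLp.smul_apply]; ring

lemma dt_zero_left (c : E3) : dt 0 c = 0 := by simp [dt, E3_zero_apply]

lemma cr_add_left (a b c : E3) : cr (a + b) c = cr a c + cr b c := by
  refine E3_ext ?_ ?_ ?_ <;> simp [cr, PiLp.add_apply] <;> ring

def lf (e1 e2 : E3) (s t : ℝ) : E3 → ℝ :=
  fun x => s * (dt (cr x e2) (cr e1 e2)) + t * (dt (cr e1 x) (cr e1 e2))

lemma lf_linear (e1 e2 : E3) (s t : ℝ) : IsLinearMap ℝ (lf e1 e2 s t) := by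
  constructor
  · intro x y
    simp only [lf, cr_add_left, cr_add_right, dt_add_left]
    ring
  · intro r x
    simp only [lf, cr_smul_left, cr_smul_right, dt_smul_left, smul_eq_mul]
    ring

lemma lf_combo (e1 e2 : E3) (s t α β : ℝ) :
    lf e1 e2 s t (α • e1 + β • e2) = (s*α + t*β) * dt (cr e1 e2) (cr e1 e2) := by
  simp only [lf, cr_add_left, cr_add_right, cr_smul_left, cr_smul_right, dt_add_left,
    dt_smul_left, cr_self, smul_zero, cr_zero_right]
  rw [dt_zero_left]
  ring

lemma expose_step {e1 e2 : E3} (hQ : 0 < dt (cr e1 e2) (cr e1 e2)) {s t α β : ℝ} {w z : E3}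
    (hdiff : z - w = α • e1 + β • e2) (hst : s*α + t*β ≤ -1) :
    lf e1 e2 s t z ≤ lf e1 e2 s t w - dt (cr e1 e2) (cr e1 e2) := by
  have h1 : lf e1 e2 s t z - lf e1 e2 s t w = (s*α+t*β) * dt (cr e1 e2) (cr e1 e2) := by
    rw [← (lf_linear e1 e2 s t).map_sub, hdiff, lf_combo]
  nlinarith [hQ, hst, h1]

lemma vertex_exposed {f : E3 → ℝ} (hf : IsLinearMap ℝ f) {w : E3} {S5 : Set E3}
    (hS5 : S5.Nonempty) (M : ℝ) (hM : ∀ z ∈ S5, f z ≤ M) (hMw : M < f w) {x : E3}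
    (hx : x ∈ convexHull ℝ (insert w S5)) (hxw : x ≠ w) : f x < f w := by
  rw [convexHull_insert hS5, mem_convexJoin] at hx
  obtain ⟨y, hy, z, hz, hxz⟩ := hx
  rw [Set.mem_singleton_iff] at hy
  subst hy
  obtain ⟨a, b, ha, hb, hab, hxe⟩ := hxz
  have hfz : f z ≤ M := by
    have hsub : convexHull ℝ S5 ⊆ {y | f y ≤ M} := convexHull_min hM (convex_halfSpace_le hf M)
    exact hsub hz
  have hb0 : 0 < b := by
    rcases lt_or_eq_of_le hb with h | h
    · exact h
    · exfalso
      apply hxw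
      have hb' : b = 0 := h.symm
      have ha1 : a = 1 := by linarith
      rw [← hxe, hb', ha1, zero_smul, add_zero, one_smul]
  have hfx : f x = a * f y + b * f z := by
    rw [← hxe, hf.map_add, hf.map_smul, hf.map_smul]; simp [smul_eq_mul]
  have hkey : a * f y + b * f y = f y := by rw [← add_mul, hab, one_mul]
  linarith [hfx, mul_lt_mul_of_pos_left hMw hb0, mul_le_mul_of_nonneg_left hfz hb0.le, hkey]

lemma not_mem_convexHull_of_lt {f : E3 → ℝ} (hf : IsLinearMap ℝ f) {S : Set E3} {w : E3}
    (hS : ∀ z ∈ S, f z < f w) : w ∉ convexHull ℝ S := by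
  intro hw
  have hsub : convexHull ℝ S ⊆ {z | f z < f w} :=
    convexHull_min hS (convex_halfSpace_lt hf _)
  have hlt : f w < f w := hsub hw
  exact lt_irrefl _ hlt

lemma pts_ne {e1 e2 : E3} (hcr : cr e1 e2 ≠ 0) {y z : E3} {a b : ℝ}
    (hdiff : z - y = a • e1 + b • e2) (hab : a ≠ 0 ∨ b ≠ 0) : y ≠ z := by
  intro h
  rw [h, sub_self] at hdiff
  obtain ⟨ha, hb⟩ := combo_zero hcr hdiff.symm
  tauto

lemma xray_diff {F V1 V2 : Set E3} (hF : F.Finite) (h1 : V1 ⊆ F) (h2 : V2 ⊆ F) {u p : E3}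
    (hcount : (V1 ∩ lineThrough p u).ncard = (V2 ∩ lineThrough p u).ncard) :
    ((F \ V2) ∩ lineThrough p u).ncard = ((F \ V1) ∩ lineThrough p u).ncard := by
  have e2' : (F \ V2) ∩ lineThrough p u = (F ∩ lineThrough p u) \ (V2 ∩ lineThrough p u) := by
    ext z; simp only [Set.mem_inter_iff, Set.mem_diff]; tauto
  have e1' : (F \ V1) ∩ lineThrough p u = (F ∩ lineThrough p u) \ (V1 ∩ lineThrough p u) := by
    ext z; simp only [Set.mem_inter_iff, Set.mem_diff]; tauto
  rw [e2', e1', Set.ncard_diff (Set.inter_subset_inter h2 (le_refl _))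
      ((hF.subset h2).inter_of_left _),
    Set.ncard_diff (Set.inter_subset_inter h1 (le_refl _)) ((hF.subset h1).inter_of_left _),
    hcount]

lemma phys_sub (m m' : Fin 6 → ℤ) : phys (m - m') = phys m - phys m' := by
  have h : m - m' = m + (-1 : ℤ) • m' := by funext i; simp [sub_eq_add_neg]
  rw [h, phys_add, phys_smul]
  push_cast
  rw [neg_smul, one_smul, ← sub_eq_add_neg]

lemma istar_sub (m m' : Fin 6 → ℤ) : istar (m - m') = istar m - istar m' := by
  have h : m - m' = m + (-1 : ℤ) • m' := by funext i; simp [sub_eq_add_neg]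
  rw [h, istar_add, istar_smul]
  push_cast
  rw [neg_smul, one_smul, ← sub_eq_add_neg]

def zmul (j k : ℤ) (m : Fin 6 → ℤ) : Fin 6 → ℤ := j • m + k • tmul m

lemma phys_zmul (j k : ℤ) (m : Fin 6 → ℤ) :
    phys (zmul j k m) = ((j:ℝ) + (k:ℝ)*gold) • phys m := by
  rw [zmul, phys_add, phys_smul, phys_smul, phys_tmul, smul_smul, ← add_smul]

lemma istar_zmul (j k : ℤ) (m : Fin 6 → ℤ) :
    istar (zmul j k m) = ((j:ℝ) + (k:ℝ)*(1-gold)) • istar m := by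
  rw [zmul, istar_add, istar_smul, istar_smul, istar_tmul, smul_smul, ← add_smul]

lemma unit_ne_zero {u : E3} (h : u ∈ Metric.sphere (0:E3) 1) : u ≠ 0 := by
  intro rfl'
  rw [Metric.mem_sphere] at h
  simp [rfl'] at h

lemma dir_data {u : E3} (h : IsLDir u) :
    ∃ (mv : Fin 6 → ℤ) (c : ℝ), c ≠ 0 ∧ u = c • phys mv ∧ phys mv ≠ 0 ∧
      (∃ r : ℝ, phys mv = r • u) := by
  obtain ⟨hs, v, hvL, hv0, c, hc⟩ := h
  obtain ⟨mv, rfl⟩ := Lset_elim hvL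
  have hc0 : c ≠ 0 := by
    intro rfl'
    rw [rfl', zero_smul] at hc
    exact unit_ne_zero hs hc
  refine ⟨mv, c, hc0, hc, hv0, ⟨c⁻¹, ?_⟩⟩
  rw [hc, smul_smul, inv_mul_cancel₀ hc0, one_smul]

lemma par_of {x y v : E3} {cx cy : ℝ} (hx : x = cx • v) (hy : y = cy • v) (hcy : cy ≠ 0) :
    ∃ r : ℝ, x = r • y := by
  refine ⟨cx/cy, ?_⟩
  rw [hx, hy, smul_smul]
  congr 1
  field_simp

lemma cr_v_ne {u1 u2 v1 v2 : E3} {c1 c2 : ℝ} (h1 : u1 = c1 • v1) (h2 : u2 = c2 • v2)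
    (hc1 : c1 ≠ 0) (hc2 : c2 ≠ 0) (hv1 : v1 ≠ 0) (hnp : ¬∃ c : ℝ, u2 = c • u1) :
    cr v1 v2 ≠ 0 := by
  intro h0
  apply hnp
  have hv2 : v2 = ((dt v1 v2)/(dt v1 v1)) • v1 := eq_smul_of_cr_eq_zero h0 hv1
  have h2' : u2 = (c2 * ((dt v1 v2)/(dt v1 v1))) • v1 := by
    rw [h2]
    nth_rewrite 1 [hv2]
    rw [smul_smul]
  exact par_of h2' h1 hc1

lemma plane_decomp {a b c : E3} (ha : gold * a 0 + a 2 = 0) (hb : gold * b 0 + b 2 = 0)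
    (hc : gold * c 0 + c 2 = 0) (hab : cr a b ≠ 0) :
    ∃ A B : ℝ, c = A • a + B • b ∧
      A = (c 0 * b 1 - c 1 * b 0)/(a 0 * b 1 - a 1 * b 0) ∧
      B = (a 0 * c 1 - a 1 * c 0)/(a 0 * b 1 - a 1 * b 0) ∧
      (a 0 * b 1 - a 1 * b 0) ≠ 0 := by
  set d := a 0 * b 1 - a 1 * b 0 with hd
  have hd0 : d ≠ 0 := by
    intro h0
    apply hab
    refine E3_ext ?_ ?_ ?_
    · rw [cr_apply0, E3_zero_apply]
      linear_combination (a 1)*hb - (b 1)*ha + gold*h0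
    · rw [cr_apply1, E3_zero_apply]
      linear_combination (b 0)*ha - (a 0)*hb
    · rw [cr_apply2, E3_zero_apply]
      linear_combination h0
  set A := (c 0 * b 1 - c 1 * b 0)/d with hA
  set B := (a 0 * c 1 - a 1 * c 0)/d with hB
  have h0 : c 0 = A * a 0 + B * b 0 := by
    rw [hA, hB]
    field_simp
    ring
  have h1 : c 1 = A * a 1 + B * b 1 := by
    rw [hA, hB]
    field_simp
    ring
  have h2 : c 2 = A * a 2 + B * b 2 := by
    linear_combination hc - A*ha - B*hb - gold*h0
  refine ⟨A, B, ?_, rfl, rfl, hd0⟩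
  refine E3_ext ?_ ?_ ?_ <;>
    simp only [PiLp.add_apply, PiLp.smul_apply, smul_eq_mul] <;> assumption

lemma phys_inQtau (m : Fin 6 → ℤ) (i : Fin 3) : inQtau (phys m i) := by
  fin_cases i
  · exact ⟨(m 0 + (m 2 + m 3)/2 : ℚ), (m 1 + (m 2 + 2*m 3)/2 : ℚ), by
      rw [show phys m ⟨0, by norm_num⟩ = phys m 0 from rfl, phys0]
      push_cast; linear_combination ((m 3:ℝ)/2)*goldsq⟩
  · exact ⟨(m 3/2 : ℚ), ((m 2 + m 3)/2 : ℚ), by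
      rw [show phys m ⟨1, by norm_num⟩ = phys m 1 from rfl, phys1]
      push_cast; linear_combination ((m 3:ℝ)/2)*goldsq⟩
  · exact ⟨(m 4 + m 2/2 : ℚ), (m 5 + m 3/2 : ℚ), by
      rw [show phys m ⟨2, by norm_num⟩ = phys m 2 from rfl, phys2]
      push_cast; ring⟩

lemma qtau_scale {A : ℝ} (h : inQtau A) :
    ∃ N : ℤ, 0 < N ∧ ∃ j k : ℤ, (N:ℝ)*A = (j:ℝ) + (k:ℝ)*gold := by
  obtain ⟨p, q, rfl⟩ := h
  have hpd : ((p.den:ℚ)) ≠ 0 := by exact_mod_cast p.den_nz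
  have hqd : ((q.den:ℚ)) ≠ 0 := by exact_mod_cast q.den_nz
  have hp : ((p.den:ℚ)) * p = (p.num:ℚ) := by
    have h := Rat.num_div_den p
    rw [div_eq_iff hpd] at h
    linear_combination -h
  have hq : ((q.den:ℚ)) * q = (q.num:ℚ) := by
    have h := Rat.num_div_den q
    rw [div_eq_iff hqd] at h
    linear_combination -h
  have hpR : ((p.den:ℝ)) * (p:ℝ) = (p.num:ℝ) := by exact_mod_cast congrArg (Rat.cast : ℚ → ℝ) hp
  have hqR : ((q.den:ℝ)) * (q:ℝ) = (q.num:ℝ) := by exact_mod_cast congrArg (Rat.cast : ℚ → ℝ) hq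
  refine ⟨(p.den : ℤ) * (q.den : ℤ), by positivity, p.num * (q.den:ℤ), q.num * (p.den:ℤ), ?_⟩
  push_cast
  linear_combination ((q.den:ℝ)) * hpR + ((p.den:ℝ))*gold * hqR
    + ((q.den:ℝ)*(p:ℝ) + (p.den:ℝ)*(q:ℝ)*gold) * (rfl : (0:ℝ) = 0)

def E1t : Fin 6 → ℤ := ![1,0,0,0,0,0]
def E3t : Fin 6 → ℤ := ![0,0,0,0,1,0]

lemma physE1_0 : phys E1t 0 = 1 := by rw [phys0]; simp [E1t, vec6_0, vec6_1, vec6_2, vec6_3]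
lemma physE1_1 : phys E1t 1 = 0 := by rw [phys1]; simp [E1t, vec6_2, vec6_3]
lemma physE1_2 : phys E1t 2 = 0 := by rw [phys2]; simp [E1t, vec6_2, vec6_3, vec6_4, vec6_5]
lemma physE3_0 : phys E3t 0 = 0 := by rw [phys0]; simp [E3t, vec6_0, vec6_1, vec6_2, vec6_3]
lemma physE3_1 : phys E3t 1 = 0 := by rw [phys1]; simp [E3t, vec6_2, vec6_3]
lemma physE3_2 : phys E3t 2 = 1 := by rw [phys2]; simp [E3t, vec6_2, vec6_3, vec6_4, vec6_5]

lemma crE1E3 : cr (phys E1t) (phys E3t) ≠ 0 := by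
  intro h
  have h1 := congrFun (congrArg WithLp.ofLp h) 1
  rw [cr_apply1, E3_zero_apply, physE1_0, physE1_2, physE3_0, physE3_2] at h1
  norm_num at h1

lemma exists_pre (U : Set E3) (hdir : ∀ u ∈ U, IsLTauDir u) (hpair : PairwiseNonParallel U)
    (hfin : U.Finite) (hcard : U.ncard ≤ 3) :
    ∃ P1 P2 : Fin 6 → ℤ, cr (phys P1) (phys P2) ≠ 0 ∧
      ∀ u ∈ U, (∃ r : ℝ, phys P1 = r • u) ∨ (∃ r : ℝ, phys P2 = r • u) ∨
        (∃ r : ℝ, phys P2 - phys P1 = r • u) := by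
  classical
  -- helper to handle a single direction
  have hdata : ∀ u ∈ U, ∃ (mv : Fin 6 → ℤ) (c : ℝ), c ≠ 0 ∧ u = c • phys mv ∧ phys mv ≠ 0 ∧
      (∃ r : ℝ, phys mv = r • u) ∧ gold * (phys mv) 0 + (phys mv) 2 = 0 := by
    intro u hu
    obtain ⟨hL, hplane⟩ := hdir u hu
    obtain ⟨mv, c, hc0, hueq, hv0, hr⟩ := dir_data hL
    refine ⟨mv, c, hc0, hueq, hv0, hr, ?_⟩
    have h0 : u 0 = c * (phys mv) 0 := by rw [hueq]; rfl
    have h2 : u 2 = c * (phys mv) 2 := by rw [hueq]; rfl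
    rw [h0, h2] at hplane
    have := mul_eq_zero.mp (by linear_combination hplane :
      c * (gold * (phys mv) 0 + (phys mv) 2) = 0)
    tauto
  rcases Set.eq_empty_or_nonempty U with rfl | hne
  · exact ⟨E1t, E3t, crE1E3, by simp⟩
  -- U nonempty: get first direction a
  obtain ⟨a, haU⟩ := hne
  obtain ⟨ma, ca, hca0, haeq, hva0, hra, hpa⟩ := hdata a haU
  by_cases hU1 : U = {a}
  · -- one direction
    by_cases hE : cr (phys ma) (phys E1t) ≠ 0
    · refine ⟨ma, E1t, hE, ?_⟩
      intro u hu
      rw [hU1, Set.mem_singleton_iff] at hu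
      subst hu
      exact Or.inl hra
    · push_neg at hE
      have hE1v : phys E1t = ((dt (phys ma) (phys E1t))/(dt (phys ma) (phys ma))) • phys ma :=
        eq_smul_of_cr_eq_zero hE hva0
      have hE3 : cr (phys ma) (phys E3t) ≠ 0 := by
        intro h3
        have hE3v : phys E3t = ((dt (phys ma) (phys E3t))/(dt (phys ma) (phys ma))) • phys ma :=
          eq_smul_of_cr_eq_zero h3 hva0
        apply crE1E3
        rw [hE1v, hE3v, cr_smul_left, cr_smul_right, cr_self, smul_zero, smul_zero]
      refine ⟨ma, E3t, hE3, ?_⟩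
      intro u hu
      rw [hU1, Set.mem_singleton_iff] at hu
      subst hu
      exact Or.inl hra
  · -- at least two directions
    have h2ex : ∃ b ∈ U, b ≠ a := by
      by_contra hcon
      push_neg at hcon
      apply hU1
      ext z
      simp only [Set.mem_singleton_iff]
      exact ⟨fun hz => hcon z hz, fun hz => hz ▸ haU⟩
    obtain ⟨b, hbU, hba⟩ := h2ex
    obtain ⟨mb, cb, hcb0, hbeq, hvb0, hrb, hpb⟩ := hdata b hbU
    have hnp_ba : ¬∃ r : ℝ, b = r • a := hpair hbU haU hba
    have hcr_ab : cr (phys ma) (phys mb) ≠ 0 :=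
      cr_v_ne haeq hbeq hca0 hcb0 hva0 hnp_ba
    by_cases hU2 : U = {a, b}
    · refine ⟨ma, mb, hcr_ab, ?_⟩
      intro u hu
      rw [hU2] at hu
      rcases hu with rfl | hu
      · exact Or.inl hra
      · rw [Set.mem_singleton_iff] at hu
        subst hu
        exact Or.inr (Or.inl hrb)
    · -- three directions
      have h3ex : ∃ c ∈ U, c ≠ a ∧ c ≠ b := by
        by_contra hcon
        push_neg at hcon
        apply hU2
        ext z
        simp only [Set.mem_insert_iff, Set.mem_singleton_iff]
        refine ⟨fun hz => ?_, fun hz => ?_⟩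
        · by_contra hcc
          push_neg at hcc
          exact hcc.2 (hcon z hz hcc.1)
        · rcases hz with rfl | rfl
          · exact haU
          · exact hbU
      obtain ⟨c, hcU, hcab⟩ := h3ex
      obtain ⟨mc, cc, hcc0, hceq, hvc0, hrc, hpc⟩ := hdata c hcU
      obtain ⟨A, B, hdec, hAval, hBval, hdne⟩ := plane_decomp hpa hpb hpc hcr_ab
      have hA0 : A ≠ 0 := by
        intro h0
        rw [h0, zero_smul, zero_add] at hdec
        have : c = (cc * B) • phys mb := by rw [hceq, hdec, smul_smul]
        exact (hpair hcU hbU hcab.2) (par_of this hbeq hcb0)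
      have hB0 : B ≠ 0 := by
        intro h0
        rw [h0, zero_smul, add_zero] at hdec
        have : c = (cc * A) • phys ma := by rw [hceq, hdec, smul_smul]
        exact (hpair hcU haU hcab.1) (par_of this haeq hca0)
      have hAq : inQtau A := by
        rw [hAval]
        exact inQtau_div
          (inQtau_sub (inQtau_mul (phys_inQtau mc 0) (phys_inQtau mb 1))
            (inQtau_mul (phys_inQtau mc 1) (phys_inQtau mb 0)))
          (inQtau_sub (inQtau_mul (phys_inQtau ma 0) (phys_inQtau mb 1))
            (inQtau_mul (phys_inQtau ma 1) (phys_inQtau mb 0))) hdne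
      have hBq : inQtau B := by
        rw [hBval]
        exact inQtau_div
          (inQtau_sub (inQtau_mul (phys_inQtau ma 0) (phys_inQtau mc 1))
            (inQtau_mul (phys_inQtau ma 1) (phys_inQtau mc 0)))
          (inQtau_sub (inQtau_mul (phys_inQtau ma 0) (phys_inQtau mb 1))
            (inQtau_mul (phys_inQtau ma 1) (phys_inQtau mb 0))) hdne
      obtain ⟨NA, hNA, jA, kA, hAsc⟩ := qtau_scale hAq
      obtain ⟨NB, hNB, jB, kB, hBsc⟩ := qtau_scale hBq
      set P1 := zmul (-(NB*jA)) (-(NB*kA)) ma with hP1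
      set P2 := zmul (NA*jB) (NA*kB) mb with hP2
      have hP1eq : phys P1 = (-(((NA*NB:ℤ)):ℝ)*A) • phys ma := by
        rw [hP1, phys_zmul]
        congr 1
        push_cast
        linear_combination (NB:ℝ)*hAsc
      have hP2eq : phys P2 = ((((NA*NB:ℤ)):ℝ)*B) • phys mb := by
        rw [hP2, phys_zmul]
        congr 1
        push_cast
        linear_combination (-(NA:ℝ))*hBsc
      have hNne : (((NA*NB:ℤ)):ℝ) ≠ 0 := by
        have : (0:ℤ) < NA*NB := mul_pos hNA hNB
        exact_mod_cast ne_of_gt this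
      have hmem : ∀ u ∈ U, u = a ∨ u = b ∨ u = c := by
        intro u hu
        by_contra hcon
        push_neg at hcon
        obtain ⟨hua, hub, huc⟩ := hcon
        have hsub : ({u, a, b, c} : Set E3) ⊆ U := by
          intro z hz
          rcases hz with rfl | rfl | rfl | hz
          · exact hu
          · exact haU
          · exact hbU
          · rw [Set.mem_singleton_iff] at hz
            exact hz ▸ hcU
        have h4 : ({u, a, b, c} : Set E3).ncard = 4 := by
          rw [Set.ncard_insert_of_notMem (by simp [hua, hub, huc]),
            Set.ncard_insert_of_notMem (by simp [Ne.symm hba, Ne.symm hcab.1]),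
            Set.ncard_pair (Ne.symm hcab.2)]
        have hle := Set.ncard_le_ncard hsub hfin
        omega
      refine ⟨P1, P2, ?_, ?_⟩
      · rw [hP1eq, hP2eq, cr_smul_left, cr_smul_right]
        exact smul_ne_zero (mul_ne_zero (neg_ne_zero.mpr hNne) hA0)
          (smul_ne_zero (mul_ne_zero hNne hB0) hcr_ab)
      · intro u hu
        obtain ⟨ra, hra'⟩ := hra
        obtain ⟨rb, hrb'⟩ := hrb
        obtain ⟨rc, hrc'⟩ := hrc
        rcases hmem u hu with rfl | rfl | rfl
        · refine Or.inl ⟨(-(((NA*NB:ℤ)):ℝ)*A) * ra, ?_⟩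
          rw [hP1eq, hra', smul_smul]
        · refine Or.inr (Or.inl ⟨(((NA*NB:ℤ)):ℝ)*B * rb, ?_⟩)
          rw [hP2eq, hrb', smul_smul]
        · have hdiff : phys P2 - phys P1 = (((NA*NB:ℤ)):ℝ) • phys mc := by
            rw [hP1eq, hP2eq, hdec]
            module
          refine Or.inr (Or.inr ⟨(((NA*NB:ℤ)):ℝ) * rc, ?_⟩)
          rw [hdiff, hrc', smul_smul]

lemma exists_e (U : Set E3) (hdir : ∀ u ∈ U, IsLTauDir u) (hpair : PairwiseNonParallel U)
    (hfin : U.Finite) (hcard : U.ncard ≤ 3) {ε : ℝ} (hε : 0 < ε) :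
    ∃ m1 m2 : Fin 6 → ℤ, cr (phys m1) (phys m2) ≠ 0 ∧ ‖istar m1‖ < ε ∧ ‖istar m2‖ < ε ∧
      ∀ u ∈ U, (∃ r : ℝ, phys m1 = r • u) ∨ (∃ r : ℝ, phys m2 = r • u) ∨
        (∃ r : ℝ, phys m2 - phys m1 = r • u) := by
  obtain ⟨P1, P2, hcr, hpar⟩ := exists_pre U hdir hpair hfin hcard
  set Mx := ‖istar P1‖ + ‖istar P2‖ + 1 with hMx
  have hMx0 : 0 < Mx := by positivity
  obtain ⟨K, hK⟩ := exists_pow_lt_of_lt_one (div_pos hε hMx0)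
    (by linarith [glt] : gold - 1 < 1)
  have hg1 : (0:ℝ) < gold - 1 := by linarith [ggt]
  have hgK : (0:ℝ) ≤ (gold-1)^K := by positivity
  have habs : |1 - gold| = gold - 1 := by rw [abs_of_neg (by linarith [ggt] : 1 - gold < 0)]; ring
  have hKM : (gold-1)^K * Mx < ε := (lt_div_iff₀ hMx0).mp hK
  have hb1 : ‖istar (tpow K P1)‖ < ε := by
    rw [istar_tpow, norm_smul, Real.norm_eq_abs, abs_pow, habs]
    calc (gold-1)^K * ‖istar P1‖ ≤ (gold-1)^K * Mx := by
          apply mul_le_mul_of_nonneg_left ?_ hgK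
          rw [hMx]
          linarith [norm_nonneg (istar P2)]
      _ < ε := hKM
  have hb2 : ‖istar (tpow K P2)‖ < ε := by
    rw [istar_tpow, norm_smul, Real.norm_eq_abs, abs_pow, habs]
    calc (gold-1)^K * ‖istar P2‖ ≤ (gold-1)^K * Mx := by
          apply mul_le_mul_of_nonneg_left ?_ hgK
          rw [hMx]
          linarith [norm_nonneg (istar P1)]
      _ < ε := hKM
  refine ⟨tpow K P1, tpow K P2, ?_, hb1, hb2, ?_⟩
  · rw [phys_tpow, phys_tpow, cr_smul_left, cr_smul_right]
    exact smul_ne_zero (pow_ne_zero _ gne) (smul_ne_zero (pow_ne_zero _ gne) hcr)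
  · intro u hu
    rcases hpar u hu with ⟨r, hr⟩ | ⟨r, hr⟩ | ⟨r, hr⟩
    · exact Or.inl ⟨gold^K * r, by rw [phys_tpow, hr, smul_smul]⟩
    · exact Or.inr (Or.inl ⟨gold^K * r, by rw [phys_tpow, hr, smul_smul]⟩)
    · refine Or.inr (Or.inr ⟨gold^K * r, ?_⟩)
      rw [phys_tpow, phys_tpow, ← smul_sub, hr, smul_smul]

set_option maxHeartbeats 4000000 in
/-- Theorem 5.12(b) of [H2]: for every generic F-type icosahedral
model set and every set of at most three pairwise non-parallel L^{(τ,0,1)}-directions,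
the convex subsets are not determined by the corresponding X-rays. -/
theorem three_directions_do_not_determine :
    ∀ (t : E3) (W : Set E3), IsWindow W → IsGeneric W →
      ∀ U : Set E3, U.Finite → U.ncard ≤ 3 → (∀ u ∈ U, IsLTauDir u) →
        PairwiseNonParallel U →
        ∃ C₁ C₂ : Set E3, ConvexSubset (modelSet t W) C₁ ∧
          ConvexSubset (modelSet t W) C₂ ∧ C₁ ≠ C₂ ∧ ∀ u ∈ U, XRayEq C₁ C₂ u := by
  intro t W hWin hgen U hUfin hU3 hUdir hUpair
  classical
  obtain ⟨w, hw⟩ := hWin.1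
  obtain ⟨ρ, hρpos, hball⟩ := Metric.isOpen_iff.mp isOpen_interior w hw
  obtain ⟨m1, m2, hcr, hsm1, hsm2, hpar⟩ :=
    exists_e U hUdir hUpair hUfin hU3 (show (0:ℝ) < ρ/16 by linarith)
  obtain ⟨m0, hm0⟩ := star_approx w (show (0:ℝ) < ρ/2 by linarith)
  set e1 := phys m1 with he1def
  set e2 := phys m2 with he2def
  set M1 := m0 + m1 with hM1
  set M2 := m0 + m1 + m2 with hM2
  set M3 := m0 + (2:ℤ)•m2 with hM3
  set M4 := m0 + (2:ℤ)•m2 - m1 with hM4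
  set M5 := m0 + m2 - m1 with hM5
  set x0 := t + phys m0 with hx0
  set x1 := t + phys M1 with hx1
  set x2 := t + phys M2 with hx2
  set x3 := t + phys M3 with hx3
  set x4 := t + phys M4 with hx4
  set x5 := t + phys M5 with hx5
  set Λ := modelSet t W with hΛ
  -- physical coordinates
  have c1 : x1 = x0 + e1 := by rw [hx1, hx0, hM1, phys_add]; abel
  have c2 : x2 = x0 + e1 + e2 := by rw [hx2, hx0, hM2, phys_add, phys_add]; abel
  have c3 : x3 = x0 + (2:ℝ)•e2 := by
    rw [hx3, hx0, hM3, phys_add, phys_smul]; push_cast; abel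
  have c4 : x4 = x0 + (2:ℝ)•e2 - e1 := by
    rw [hx4, hx0, hM4, phys_sub, phys_add, phys_smul]; push_cast; abel
  have c5 : x5 = x0 + e2 - e1 := by
    rw [hx5, hx0, hM5, phys_sub, phys_add]; abel
  -- model set membership of vertices
  have hWmem : ∀ mm : Fin 6 → ℤ, ‖istar mm - w‖ < ρ → (t + phys mm) ∈ Λ := by
    intro mm hnear
    refine ⟨phys mm, phys_mem_Lset mm, ?_, rfl⟩
    rw [star_phys]
    have hmem : istar mm ∈ Metric.ball w ρ := by rwa [Metric.mem_ball, dist_eq_norm]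
    exact interior_subset (hball hmem)
  have n2s : ‖(2:ℝ) • istar m2‖ = 2*‖istar m2‖ := by
    rw [norm_smul, Real.norm_eq_abs]; norm_num
  have hx0Λ : x0 ∈ Λ := hWmem m0 (by linarith [hm0])
  have hx1Λ : x1 ∈ Λ := by
    apply hWmem
    have hi : istar M1 - w = (istar m0 - w) + istar m1 := by rw [hM1, istar_add]; abel
    calc ‖istar M1 - w‖ = ‖(istar m0 - w) + istar m1‖ := by rw [hi]
      _ ≤ ‖istar m0 - w‖ + ‖istar m1‖ := norm_add_le _ _
      _ < ρ := by linarith [hm0, hsm1]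
  have hx2Λ : x2 ∈ Λ := by
    apply hWmem
    have hi : istar M2 - w = (istar m0 - w) + istar m1 + istar m2 := by
      rw [hM2, istar_add, istar_add]; abel
    calc ‖istar M2 - w‖ = ‖(istar m0 - w) + istar m1 + istar m2‖ := by rw [hi]
      _ ≤ ‖(istar m0 - w) + istar m1‖ + ‖istar m2‖ := norm_add_le _ _
      _ ≤ ‖istar m0 - w‖ + ‖istar m1‖ + ‖istar m2‖ := by
          linarith [norm_add_le (istar m0 - w) (istar m1)]
      _ < ρ := by linarith [hm0, hsm1, hsm2]
  have hx3Λ : x3 ∈ Λ := by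
    apply hWmem
    have hi : istar M3 - w = (istar m0 - w) + (2:ℝ) • istar m2 := by
      rw [hM3, istar_add, istar_smul]; push_cast; abel
    calc ‖istar M3 - w‖ = ‖(istar m0 - w) + (2:ℝ) • istar m2‖ := by rw [hi]
      _ ≤ ‖istar m0 - w‖ + ‖(2:ℝ) • istar m2‖ := norm_add_le _ _
      _ < ρ := by rw [n2s]; linarith [hm0, hsm2]
  have hx4Λ : x4 ∈ Λ := by
    apply hWmem
    have hi : istar M4 - w = (istar m0 - w) + (2:ℝ) • istar m2 + (-(istar m1)) := by
      rw [hM4, istar_sub, istar_add, istar_smul]; push_cast; abel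
    calc ‖istar M4 - w‖ = ‖(istar m0 - w) + (2:ℝ) • istar m2 + (-(istar m1))‖ := by rw [hi]
      _ ≤ ‖(istar m0 - w) + (2:ℝ) • istar m2‖ + ‖-(istar m1)‖ := norm_add_le _ _
      _ ≤ ‖istar m0 - w‖ + ‖(2:ℝ) • istar m2‖ + ‖istar m1‖ := by
          rw [norm_neg]
          linarith [norm_add_le (istar m0 - w) ((2:ℝ) • istar m2)]
      _ < ρ := by rw [n2s]; linarith [hm0, hsm1, hsm2]
  have hx5Λ : x5 ∈ Λ := by
    apply hWmem
    have hi : istar M5 - w = (istar m0 - w) + istar m2 + (-(istar m1)) := by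
      rw [hM5, istar_sub, istar_add]; abel
    calc ‖istar M5 - w‖ = ‖(istar m0 - w) + istar m2 + (-(istar m1))‖ := by rw [hi]
      _ ≤ ‖(istar m0 - w) + istar m2‖ + ‖-(istar m1)‖ := norm_add_le _ _
      _ ≤ ‖istar m0 - w‖ + ‖istar m2‖ + ‖istar m1‖ := by
          rw [norm_neg]
          linarith [norm_add_le (istar m0 - w) (istar m2)]
      _ < ρ := by linarith [hm0, hsm1, hsm2]
  set P6 : Set E3 := {x0, x1, x2, x3, x4, x5} with hP6
  set cvx := convexHull ℝ P6 with hcvx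
  set F := Λ ∩ cvx with hF
  have hdcc : 0 < dt (cr e1 e2) (cr e1 e2) := dt_pos hcr
  have hne02 : x0 ≠ x2 := by
    refine pts_ne hcr (show x2 - x0 = (1:ℝ) • e1 + (1:ℝ) • e2 from by rw [c2]; module) ?_
    exact Or.inl (by norm_num)
  have hne04 : x0 ≠ x4 := by
    refine pts_ne hcr (show x4 - x0 = (-1:ℝ) • e1 + (2:ℝ) • e2 from by rw [c4]; module) ?_
    exact Or.inl (by norm_num)
  have hne24 : x2 ≠ x4 := by
    refine pts_ne hcr (show x4 - x2 = (-2:ℝ) • e1 + (1:ℝ) • e2 from by rw [c4, c2]; module) ?_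
    exact Or.inl (by norm_num)
  have hne13 : x1 ≠ x3 := by
    refine pts_ne hcr (show x3 - x1 = (-1:ℝ) • e1 + (2:ℝ) • e2 from by rw [c3, c1]; module) ?_
    exact Or.inl (by norm_num)
  have hne15 : x1 ≠ x5 := by
    refine pts_ne hcr (show x5 - x1 = (-2:ℝ) • e1 + (1:ℝ) • e2 from by rw [c5, c1]; module) ?_
    exact Or.inl (by norm_num)
  have hne35 : x3 ≠ x5 := by
    refine pts_ne hcr (show x5 - x3 = (-1:ℝ) • e1 + (-1:ℝ) • e2 from by rw [c5, c3]; module) ?_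
    exact Or.inl (by norm_num)
  have hne01 : x0 ≠ x1 := by
    refine pts_ne hcr (show x1 - x0 = (1:ℝ) • e1 + (0:ℝ) • e2 from by rw [c1]; module) ?_
    exact Or.inl (by norm_num)
  have hne03 : x0 ≠ x3 := by
    refine pts_ne hcr (show x3 - x0 = (0:ℝ) • e1 + (2:ℝ) • e2 from by rw [c3]; module) ?_
    exact Or.inr (by norm_num)
  have hne05 : x0 ≠ x5 := by
    refine pts_ne hcr (show x5 - x0 = (-1:ℝ) • e1 + (1:ℝ) • e2 from by rw [c5]; module) ?_
    exact Or.inl (by norm_num)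
  -- F finite
  obtain ⟨R2, hR2⟩ := isBounded_iff_forall_norm_le.mp hWin.2.2.isBounded
  have hR2' : ∀ w' ∈ W, ‖w'‖ ≤ R2 := fun w' hw' => hR2 w' (hWin.2.1 hw')
  set R := ‖x0‖ + ‖x1‖ + ‖x2‖ + ‖x3‖ + ‖x4‖ + ‖x5‖ with hR
  have hcvxb : ∀ x ∈ cvx, ‖x‖ ≤ R := by
    intro x hx
    have hsub : P6 ⊆ Metric.closedBall 0 R := by
      intro z hz
      rw [hP6] at hz
      rw [Metric.mem_closedBall, dist_zero_right]
      rcases hz with rfl | rfl | rfl | rfl | rfl | hz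
      · linarith [norm_nonneg x1, norm_nonneg x2, norm_nonneg x3, norm_nonneg x4, norm_nonneg x5]
      · linarith [norm_nonneg x0, norm_nonneg x2, norm_nonneg x3, norm_nonneg x4, norm_nonneg x5]
      · linarith [norm_nonneg x0, norm_nonneg x1, norm_nonneg x3, norm_nonneg x4, norm_nonneg x5]
      · linarith [norm_nonneg x0, norm_nonneg x1, norm_nonneg x2, norm_nonneg x4, norm_nonneg x5]
      · linarith [norm_nonneg x0, norm_nonneg x1, norm_nonneg x2, norm_nonneg x3, norm_nonneg x5]
      · rw [Set.mem_singleton_iff] at hz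
        subst hz
        linarith [norm_nonneg x0, norm_nonneg x1, norm_nonneg x2, norm_nonneg x3, norm_nonneg x4]
    have := convexHull_min hsub (convex_closedBall (0:E3) R) hx
    rwa [Metric.mem_closedBall, dist_zero_right] at this
  have hFfin : F.Finite := finite_core t W cvx R2 hR2' R hcvxb
  -- vertices in F
  have hx0F : x0 ∈ F := ⟨hx0Λ, subset_convexHull ℝ P6 (by rw [hP6]; exact Set.mem_insert _ _)⟩
  have hx1F : x1 ∈ F := ⟨hx1Λ, subset_convexHull ℝ P6 (by rw [hP6]; exact Set.mem_insert_of_mem _ (Set.mem_insert _ _))⟩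
  have hx2F : x2 ∈ F := ⟨hx2Λ, subset_convexHull ℝ P6 (by rw [hP6]; exact Set.mem_insert_of_mem _ (Set.mem_insert_of_mem _ (Set.mem_insert _ _)))⟩
  have hx3F : x3 ∈ F := ⟨hx3Λ, subset_convexHull ℝ P6 (by rw [hP6]; exact Set.mem_insert_of_mem _ (Set.mem_insert_of_mem _ (Set.mem_insert_of_mem _ (Set.mem_insert _ _))))⟩
  have hx4F : x4 ∈ F := ⟨hx4Λ, subset_convexHull ℝ P6 (by rw [hP6]; exact Set.mem_insert_of_mem _ (Set.mem_insert_of_mem _ (Set.mem_insert_of_mem _ (Set.mem_insert_of_mem _ (Set.mem_insert _ _)))))⟩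
  have hx5F : x5 ∈ F := ⟨hx5Λ, subset_convexHull ℝ P6 (by rw [hP6]; exact Set.mem_insert_of_mem _ (Set.mem_insert_of_mem _ (Set.mem_insert_of_mem _ (Set.mem_insert_of_mem _ (Set.mem_insert_of_mem _ rfl)))))⟩
  set V1 : Set E3 := {x0, x2, x4} with hV1
  set V2 : Set E3 := {x1, x3, x5} with hV2
  have hV1F : V1 ⊆ F := by
    intro z hz
    rw [hV1] at hz
    rcases hz with rfl | rfl | hz
    · exact hx0F
    · exact hx2F
    · rw [Set.mem_singleton_iff] at hz; exact hz ▸ hx4F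
  have hV2F : V2 ⊆ F := by
    intro z hz
    rw [hV2] at hz
    rcases hz with rfl | rfl | hz
    · exact hx1F
    · exact hx3F
    · rw [Set.mem_singleton_iff] at hz; exact hz ▸ hx5F
  set C1 := F \ V2 with hC1
  set C2 := F \ V1 with hC2
  have hP6ins0 : P6 = insert x0 ({x1, x2, x3, x4, x5} : Set E3) := by
    rw [hP6]
  have hexp0 : ∀ z ∈ F, z ≠ x0 → lf e1 e2 (-1:ℝ) (-2:ℝ) z < lf e1 e2 (-1:ℝ) (-2:ℝ) x0 := by
    intro z hz hzk
    refine vertex_exposed (S5 := ({x1, x2, x3, x4, x5} : Set E3)) (lf_linear e1 e2 (-1:ℝ) (-2:ℝ)) ⟨x1, Set.mem_insert _ _⟩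
      (lf e1 e2 (-1:ℝ) (-2:ℝ) x0 - dt (cr e1 e2) (cr e1 e2)) ?_ (by linarith [hdcc]) ?_ hzk
    · intro y hy
      simp only [Set.mem_insert_iff, Set.mem_singleton_iff] at hy
      rcases hy with rfl | rfl | rfl | rfl | rfl
      · exact expose_step hdcc
          (show x1 - x0 = (1:ℝ) • e1 + (0:ℝ) • e2 from by rw [c1]; module) (by norm_num)
      · exact expose_step hdcc
          (show x2 - x0 = (1:ℝ) • e1 + (1:ℝ) • e2 from by rw [c2]; module) (by norm_num)
      · exact expose_step hdcc
          (show x3 - x0 = (0:ℝ) • e1 + (2:ℝ) • e2 from by rw [c3]; module) (by norm_num)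
      · exact expose_step hdcc
          (show x4 - x0 = (-1:ℝ) • e1 + (2:ℝ) • e2 from by rw [c4]; module) (by norm_num)
      · exact expose_step hdcc
          (show x5 - x0 = (-1:ℝ) • e1 + (1:ℝ) • e2 from by rw [c5]; module) (by norm_num)
    · have hzc : z ∈ cvx := hz.2
      rw [hcvx, hP6ins0] at hzc
      exact hzc
  have hP6ins1 : P6 = insert x1 ({x0, x2, x3, x4, x5} : Set E3) := by
    rw [hP6, Set.insert_comm x0 x1]
  have hexp1 : ∀ z ∈ F, z ≠ x1 → lf e1 e2 (1:ℝ) (-1:ℝ) z < lf e1 e2 (1:ℝ) (-1:ℝ) x1 := by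
    intro z hz hzk
    refine vertex_exposed (S5 := ({x0, x2, x3, x4, x5} : Set E3)) (lf_linear e1 e2 (1:ℝ) (-1:ℝ)) ⟨x0, Set.mem_insert _ _⟩
      (lf e1 e2 (1:ℝ) (-1:ℝ) x1 - dt (cr e1 e2) (cr e1 e2)) ?_ (by linarith [hdcc]) ?_ hzk
    · intro y hy
      simp only [Set.mem_insert_iff, Set.mem_singleton_iff] at hy
      rcases hy with rfl | rfl | rfl | rfl | rfl
      · exact expose_step hdcc
          (show x0 - x1 = (-1:ℝ) • e1 + (0:ℝ) • e2 from by rw [c1]; module) (by norm_num)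
      · exact expose_step hdcc
          (show x2 - x1 = (0:ℝ) • e1 + (1:ℝ) • e2 from by rw [c2, c1]; module) (by norm_num)
      · exact expose_step hdcc
          (show x3 - x1 = (-1:ℝ) • e1 + (2:ℝ) • e2 from by rw [c3, c1]; module) (by norm_num)
      · exact expose_step hdcc
          (show x4 - x1 = (-2:ℝ) • e1 + (2:ℝ) • e2 from by rw [c4, c1]; module) (by norm_num)
      · exact expose_step hdcc
          (show x5 - x1 = (-2:ℝ) • e1 + (1:ℝ) • e2 from by rw [c5, c1]; module) (by norm_num)
    · have hzc : z ∈ cvx := hz.2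
      rw [hcvx, hP6ins1] at hzc
      exact hzc
  have hP6ins2 : P6 = insert x2 ({x0, x1, x3, x4, x5} : Set E3) := by
    rw [hP6, Set.insert_comm x1 x2, Set.insert_comm x0 x2]
  have hexp2 : ∀ z ∈ F, z ≠ x2 → lf e1 e2 (2:ℝ) (1:ℝ) z < lf e1 e2 (2:ℝ) (1:ℝ) x2 := by
    intro z hz hzk
    refine vertex_exposed (S5 := ({x0, x1, x3, x4, x5} : Set E3)) (lf_linear e1 e2 (2:ℝ) (1:ℝ)) ⟨x0, Set.mem_insert _ _⟩
      (lf e1 e2 (2:ℝ) (1:ℝ) x2 - dt (cr e1 e2) (cr e1 e2)) ?_ (by linarith [hdcc]) ?_ hzk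
    · intro y hy
      simp only [Set.mem_insert_iff, Set.mem_singleton_iff] at hy
      rcases hy with rfl | rfl | rfl | rfl | rfl
      · exact expose_step hdcc
          (show x0 - x2 = (-1:ℝ) • e1 + (-1:ℝ) • e2 from by rw [c2]; module) (by norm_num)
      · exact expose_step hdcc
          (show x1 - x2 = (0:ℝ) • e1 + (-1:ℝ) • e2 from by rw [c1, c2]; module) (by norm_num)
      · exact expose_step hdcc
          (show x3 - x2 = (-1:ℝ) • e1 + (1:ℝ) • e2 from by rw [c3, c2]; module) (by norm_num)
      · exact expose_step hdcc
          (show x4 - x2 = (-2:ℝ) • e1 + (1:ℝ) • e2 from by rw [c4, c2]; module) (by norm_num)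
      · exact expose_step hdcc
          (show x5 - x2 = (-2:ℝ) • e1 + (0:ℝ) • e2 from by rw [c5, c2]; module) (by norm_num)
    · have hzc : z ∈ cvx := hz.2
      rw [hcvx, hP6ins2] at hzc
      exact hzc
  have hP6ins3 : P6 = insert x3 ({x0, x1, x2, x4, x5} : Set E3) := by
    rw [hP6, Set.insert_comm x2 x3, Set.insert_comm x1 x3, Set.insert_comm x0 x3]
  have hexp3 : ∀ z ∈ F, z ≠ x3 → lf e1 e2 (1:ℝ) (2:ℝ) z < lf e1 e2 (1:ℝ) (2:ℝ) x3 := by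
    intro z hz hzk
    refine vertex_exposed (S5 := ({x0, x1, x2, x4, x5} : Set E3)) (lf_linear e1 e2 (1:ℝ) (2:ℝ)) ⟨x0, Set.mem_insert _ _⟩
      (lf e1 e2 (1:ℝ) (2:ℝ) x3 - dt (cr e1 e2) (cr e1 e2)) ?_ (by linarith [hdcc]) ?_ hzk
    · intro y hy
      simp only [Set.mem_insert_iff, Set.mem_singleton_iff] at hy
      rcases hy with rfl | rfl | rfl | rfl | rfl
      · exact expose_step hdcc
          (show x0 - x3 = (0:ℝ) • e1 + (-2:ℝ) • e2 from by rw [c3]; module) (by norm_num)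
      · exact expose_step hdcc
          (show x1 - x3 = (1:ℝ) • e1 + (-2:ℝ) • e2 from by rw [c1, c3]; module) (by norm_num)
      · exact expose_step hdcc
          (show x2 - x3 = (1:ℝ) • e1 + (-1:ℝ) • e2 from by rw [c2, c3]; module) (by norm_num)
      · exact expose_step hdcc
          (show x4 - x3 = (-1:ℝ) • e1 + (0:ℝ) • e2 from by rw [c4, c3]; module) (by norm_num)
      · exact expose_step hdcc
          (show x5 - x3 = (-1:ℝ) • e1 + (-1:ℝ) • e2 from by rw [c5, c3]; module) (by norm_num)
    · have hzc : z ∈ cvx := hz.2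
      rw [hcvx, hP6ins3] at hzc
      exact hzc
  have hP6ins4 : P6 = insert x4 ({x0, x1, x2, x3, x5} : Set E3) := by
    rw [hP6, Set.insert_comm x3 x4, Set.insert_comm x2 x4, Set.insert_comm x1 x4, Set.insert_comm x0 x4]
  have hexp4 : ∀ z ∈ F, z ≠ x4 → lf e1 e2 (-1:ℝ) (1:ℝ) z < lf e1 e2 (-1:ℝ) (1:ℝ) x4 := by
    intro z hz hzk
    refine vertex_exposed (S5 := ({x0, x1, x2, x3, x5} : Set E3)) (lf_linear e1 e2 (-1:ℝ) (1:ℝ)) ⟨x0, Set.mem_insert _ _⟩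
      (lf e1 e2 (-1:ℝ) (1:ℝ) x4 - dt (cr e1 e2) (cr e1 e2)) ?_ (by linarith [hdcc]) ?_ hzk
    · intro y hy
      simp only [Set.mem_insert_iff, Set.mem_singleton_iff] at hy
      rcases hy with rfl | rfl | rfl | rfl | rfl
      · exact expose_step hdcc
          (show x0 - x4 = (1:ℝ) • e1 + (-2:ℝ) • e2 from by rw [c4]; module) (by norm_num)
      · exact expose_step hdcc
          (show x1 - x4 = (2:ℝ) • e1 + (-2:ℝ) • e2 from by rw [c1, c4]; module) (by norm_num)
      · exact expose_step hdcc
          (show x2 - x4 = (2:ℝ) • e1 + (-1:ℝ) • e2 from by rw [c2, c4]; module) (by norm_num)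
      · exact expose_step hdcc
          (show x3 - x4 = (1:ℝ) • e1 + (0:ℝ) • e2 from by rw [c3, c4]; module) (by norm_num)
      · exact expose_step hdcc
          (show x5 - x4 = (0:ℝ) • e1 + (-1:ℝ) • e2 from by rw [c5, c4]; module) (by norm_num)
    · have hzc : z ∈ cvx := hz.2
      rw [hcvx, hP6ins4] at hzc
      exact hzc
  have hP6ins5 : P6 = insert x5 ({x0, x1, x2, x3, x4} : Set E3) := by
    rw [hP6, Set.pair_comm x4 x5, Set.insert_comm x3 x5, Set.insert_comm x2 x5, Set.insert_comm x1 x5, Set.insert_comm x0 x5]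
  have hexp5 : ∀ z ∈ F, z ≠ x5 → lf e1 e2 (-2:ℝ) (-1:ℝ) z < lf e1 e2 (-2:ℝ) (-1:ℝ) x5 := by
    intro z hz hzk
    refine vertex_exposed (S5 := ({x0, x1, x2, x3, x4} : Set E3)) (lf_linear e1 e2 (-2:ℝ) (-1:ℝ)) ⟨x0, Set.mem_insert _ _⟩
      (lf e1 e2 (-2:ℝ) (-1:ℝ) x5 - dt (cr e1 e2) (cr e1 e2)) ?_ (by linarith [hdcc]) ?_ hzk
    · intro y hy
      simp only [Set.mem_insert_iff, Set.mem_singleton_iff] at hy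
      rcases hy with rfl | rfl | rfl | rfl | rfl
      · exact expose_step hdcc
          (show x0 - x5 = (1:ℝ) • e1 + (-1:ℝ) • e2 from by rw [c5]; module) (by norm_num)
      · exact expose_step hdcc
          (show x1 - x5 = (2:ℝ) • e1 + (-1:ℝ) • e2 from by rw [c1, c5]; module) (by norm_num)
      · exact expose_step hdcc
          (show x2 - x5 = (2:ℝ) • e1 + (0:ℝ) • e2 from by rw [c2, c5]; module) (by norm_num)
      · exact expose_step hdcc
          (show x3 - x5 = (1:ℝ) • e1 + (1:ℝ) • e2 from by rw [c3, c5]; module) (by norm_num)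
      · exact expose_step hdcc
          (show x4 - x5 = (0:ℝ) • e1 + (1:ℝ) • e2 from by rw [c4, c5]; module) (by norm_num)
    · have hzc : z ∈ cvx := hz.2
      rw [hcvx, hP6ins5] at hzc
      exact hzc
  have hnotin1 : x1 ∉ convexHull ℝ C1 := by
    apply not_mem_convexHull_of_lt (lf_linear e1 e2 (1:ℝ) (-1:ℝ))
    intro z hz
    refine hexp1 z hz.1 ?_
    intro h
    apply hz.2
    rw [hV2, h]
    exact Set.mem_insert _ _
  have hnotin3 : x3 ∉ convexHull ℝ C1 := by
    apply not_mem_convexHull_of_lt (lf_linear e1 e2 (1:ℝ) (2:ℝ))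
    intro z hz
    refine hexp3 z hz.1 ?_
    intro h
    apply hz.2
    rw [hV2, h]
    exact Set.mem_insert_of_mem _ (Set.mem_insert _ _)
  have hnotin5 : x5 ∉ convexHull ℝ C1 := by
    apply not_mem_convexHull_of_lt (lf_linear e1 e2 (-2:ℝ) (-1:ℝ))
    intro z hz
    refine hexp5 z hz.1 ?_
    intro h
    apply hz.2
    rw [hV2, h]
    exact Set.mem_insert_of_mem _ (Set.mem_insert_of_mem _ rfl)
  have hnotin0 : x0 ∉ convexHull ℝ C2 := by
    apply not_mem_convexHull_of_lt (lf_linear e1 e2 (-1:ℝ) (-2:ℝ))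
    intro z hz
    refine hexp0 z hz.1 ?_
    intro h
    apply hz.2
    rw [hV1, h]
    exact Set.mem_insert _ _
  have hnotin2 : x2 ∉ convexHull ℝ C2 := by
    apply not_mem_convexHull_of_lt (lf_linear e1 e2 (2:ℝ) (1:ℝ))
    intro z hz
    refine hexp2 z hz.1 ?_
    intro h
    apply hz.2
    rw [hV1, h]
    exact Set.mem_insert_of_mem _ (Set.mem_insert _ _)
  have hnotin4 : x4 ∉ convexHull ℝ C2 := by
    apply not_mem_convexHull_of_lt (lf_linear e1 e2 (-1:ℝ) (1:ℝ))
    intro z hz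
    refine hexp4 z hz.1 ?_
    intro h
    apply hz.2
    rw [hV1, h]
    exact Set.mem_insert_of_mem _ (Set.mem_insert_of_mem _ rfl)
  have hcsub1 : convexHull ℝ C1 ⊆ cvx :=
    convexHull_min (fun y hy => hy.1.2) (convex_convexHull ℝ P6)
  have hcsub2 : convexHull ℝ C2 ⊆ cvx :=
    convexHull_min (fun y hy => hy.1.2) (convex_convexHull ℝ P6)
  have hconv1 : ConvexSubset Λ C1 := by
    refine ⟨hFfin.subset Set.diff_subset, fun z hz => hz.1.1, ?_⟩
    apply Set.Subset.antisymm
    · intro z hz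
      exact ⟨subset_convexHull ℝ C1 hz, hz.1.1⟩
    · rintro z ⟨hzc, hzΛ⟩
      have hzF : z ∈ F := ⟨hzΛ, hcsub1 hzc⟩
      refine ⟨hzF, ?_⟩
      intro hzV
      rw [hV2] at hzV
      rcases hzV with rfl | rfl | hzV
      · exact hnotin1 hzc
      · exact hnotin3 hzc
      · rw [Set.mem_singleton_iff] at hzV
        subst hzV
        exact hnotin5 hzc
  have hconv2 : ConvexSubset Λ C2 := by
    refine ⟨hFfin.subset Set.diff_subset, fun z hz => hz.1.1, ?_⟩
    apply Set.Subset.antisymm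
    · intro z hz
      exact ⟨subset_convexHull ℝ C2 hz, hz.1.1⟩
    · rintro z ⟨hzc, hzΛ⟩
      have hzF : z ∈ F := ⟨hzΛ, hcsub2 hzc⟩
      refine ⟨hzF, ?_⟩
      intro hzV
      rw [hV1] at hzV
      rcases hzV with rfl | rfl | hzV
      · exact hnotin0 hzc
      · exact hnotin2 hzc
      · rw [Set.mem_singleton_iff] at hzV
        subst hzV
        exact hnotin4 hzc
  have hx0C1 : x0 ∈ C1 := by
    refine ⟨hx0F, ?_⟩
    intro h
    rw [hV2] at h
    rcases h with h | h | h
    · exact hne01 h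
    · exact hne03 h
    · rw [Set.mem_singleton_iff] at h
      exact hne05 h
  have hx0nC2 : x0 ∉ C2 := by
    intro h
    apply h.2
    rw [hV1]
    exact Set.mem_insert _ _
  have hCne : C1 ≠ C2 := by
    intro h
    rw [h] at hx0C1
    exact hx0nC2 hx0C1
  refine ⟨C1, C2, hconv1, hconv2, hCne, ?_⟩
  intro u hu p
  have hswap : ∀ y1 y2 y3 : E3, ({y1, y3, y2} : Set E3) = {y1, y2, y3} := by
    intro y1 y2 y3
    rw [Set.pair_comm y3 y2]
  apply xray_diff hFfin hV1F hV2F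
  rcases hpar u hu with ⟨r, hr⟩ | ⟨r, hr⟩ | ⟨r, hr⟩
  · -- e1 = r • u
    have key := xray_pair (u := u)
      (show x1 = x0 + r • u from by rw [c1, hr])
      (show x5 = x2 + (-(2*r)) • u from by rw [c5, c2, hr]; module)
      (show x3 = x4 + r • u from by rw [c3, c4, hr]; module)
      hne02 hne04 hne24 hne15 hne13 (Ne.symm hne35) p
    rw [hV1, hV2, ← hswap x1 x3 x5]
    exact key
  · -- e2 = r • u
    have key := xray_pair (u := u)
      (show x3 = x0 + (2*r) • u from by rw [c3, hr]; module)
      (show x1 = x2 + (-r) • u from by rw [c1, c2, hr]; module)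
      (show x5 = x4 + (-r) • u from by rw [c5, c4, hr]; module)
      hne02 hne04 hne24 (Ne.symm hne13) hne35 hne15 p
    rw [hV1, hV2]
    have hperm : ({x3, x1, x5} : Set E3) = {x1, x3, x5} :=
      Set.insert_comm x3 x1 {x5}
    rw [← hperm]
    exact key
  · -- e2 - e1 = r • u
    have he2' : e2 = e1 + r • u := by rw [← hr]; module
    have key := xray_pair (u := u)
      (show x5 = x0 + r • u from by rw [c5, he2']; module)
      (show x3 = x2 + r • u from by rw [c3, c2, he2']; module)
      (show x1 = x4 + (-(2*r)) • u from by rw [c1, c4, he2']; module)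
      hne02 hne04 hne24 (Ne.symm hne35) (Ne.symm hne15) (Ne.symm hne13) p
    rw [hV1, hV2]
    have hperm : ({x5, x3, x1} : Set E3) = {x1, x3, x5} := by
      rw [Set.insert_comm x5 x3, Set.pair_comm x5 x1, Set.insert_comm x3 x1]
    rw [← hperm]
    exact key

end
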